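/- arXiv:1909.10156 — 6 statements merged into one kernel-verified Lean document; each statement's English description precedes it below -/
import Mathlib

section
/- Let Ω ⊆ ℝ² be open, let α, θ : Ω → ℝ be C¹, set ω = α − θ, and assume sin(ω) ≠ 0 at every point of Ω. Then for every C² function I : Ω → ℝ, at every point of Ω: ∂⁰(∂⁺I) − ∂⁺(∂⁰I) = (1/sin(ω))·[ (cos(ω)·∂⁺θ − ∂⁰α)·∂⁰I − (∂⁺θ − cos(ω)·∂⁰α)·∂⁺I ], where ∂⁺f = cos(α)·f_x + sin(α)·f_y and ∂⁰f = cos(θ)·f_x + sin(θ)·f_y. -/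
open Real Set

/-- Partial derivative in the `x`-direction. -/
noncomputable def px (f : ℝ × ℝ → ℝ) (p : ℝ × ℝ) : ℝ := fderiv ℝ f p (1, 0)

/-- Partial derivative in the `y`-direction. -/
noncomputable def py (f : ℝ × ℝ → ℝ) (p : ℝ × ℝ) : ℝ := fderiv ℝ f p (0, 1)

/-- Normalized directional derivative along the direction of inclination angle `a`:
`cos (a p) · f_x + sin (a p) · f_y`. -/
noncomputable def dDir (a : ℝ × ℝ → ℝ) (f : ℝ × ℝ → ℝ) (p : ℝ × ℝ) : ℝ :=
  Real.cos (a p) * px f p + Real.sin (a p) * py f p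

lemma fderiv_dDir_apply (a f : ℝ × ℝ → ℝ) (p v : ℝ × ℝ)
    {A : (ℝ × ℝ) →L[ℝ] ℝ} {H : (ℝ × ℝ) →L[ℝ] ((ℝ × ℝ) →L[ℝ] ℝ)}
    (hA : HasFDerivAt a A p) (hH : HasFDerivAt (fderiv ℝ f) H p) :
    fderiv ℝ (dDir a f) p v =
      Real.cos (a p) * H v (1, 0) + Real.sin (a p) * H v (0, 1) +
        A v * (-Real.sin (a p) * fderiv ℝ f p (1, 0) + Real.cos (a p) * fderiv ℝ f p (0, 1)) := by
  have hcos : HasFDerivAt (fun q => Real.cos (a q)) ((-Real.sin (a p)) • A) p :=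
    (Real.hasDerivAt_cos (a p)).comp_hasFDerivAt p hA
  have hsin : HasFDerivAt (fun q => Real.sin (a q)) ((Real.cos (a p)) • A) p :=
    (Real.hasDerivAt_sin (a p)).comp_hasFDerivAt p hA
  have h1 : HasFDerivAt (fun q => fderiv ℝ f q (1, 0))
      ((fderiv ℝ f p).comp (0 : (ℝ × ℝ) →L[ℝ] (ℝ × ℝ)) + H.flip (1, 0)) p :=
    hH.clm_apply (hasFDerivAt_const _ _)
  have h2 : HasFDerivAt (fun q => fderiv ℝ f q (0, 1))
      ((fderiv ℝ f p).comp (0 : (ℝ × ℝ) →L[ℝ] (ℝ × ℝ)) + H.flip (0, 1)) p :=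
    hH.clm_apply (hasFDerivAt_const _ _)
  have hD : HasFDerivAt (dDir a f)
      ((Real.cos (a p) • ((fderiv ℝ f p).comp (0 : (ℝ × ℝ) →L[ℝ] (ℝ × ℝ)) + H.flip (1, 0)) +
          (fderiv ℝ f p (1, 0)) • ((-Real.sin (a p)) • A)) +
        (Real.sin (a p) • ((fderiv ℝ f p).comp (0 : (ℝ × ℝ) →L[ℝ] (ℝ × ℝ)) + H.flip (0, 1)) +
          (fderiv ℝ f p (0, 1)) • ((Real.cos (a p)) • A))) p :=
    (hcos.mul h1).add (hsin.mul h2)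
  rw [hD.fderiv]
  simp only [ContinuousLinearMap.add_apply, ContinuousLinearMap.smul_apply,
    ContinuousLinearMap.flip_apply, ContinuousLinearMap.comp_apply,
    ContinuousLinearMap.zero_apply, map_zero, smul_eq_mul]
  ring

/-- the commutator relation between `∂⁰` (direction `θ`) and `∂⁺`
(direction `α`), where `ω = α − θ`. -/
theorem commutator_d0_dplus
    (Ω : Set (ℝ × ℝ)) (hΩ : IsOpen Ω)
    (α θ : ℝ × ℝ → ℝ)
    (hα : ContDiffOn ℝ 1 α Ω) (hθ : ContDiffOn ℝ 1 θ Ω)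
    (hsin : ∀ p ∈ Ω, Real.sin (α p - θ p) ≠ 0)
    (I : ℝ × ℝ → ℝ) (hI : ContDiffOn ℝ 2 I Ω) :
    ∀ p ∈ Ω,
      dDir θ (dDir α I) p - dDir α (dDir θ I) p =
        (1 / Real.sin (α p - θ p)) *
          ((Real.cos (α p - θ p) * dDir α θ p - dDir θ α p) * dDir θ I p -
            (dDir α θ p - Real.cos (α p - θ p) * dDir θ α p) * dDir α I p) := by
  intro p hp
  have hpΩ : Ω ∈ nhds p := hΩ.mem_nhds hp
  have hαd : HasFDerivAt α (fderiv ℝ α p) p :=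
    ((hα.differentiableOn one_ne_zero).differentiableAt hpΩ).hasFDerivAt
  have hθd : HasFDerivAt θ (fderiv ℝ θ p) p :=
    ((hθ.differentiableOn one_ne_zero).differentiableAt hpΩ).hasFDerivAt
  have hF : ContDiffOn ℝ 1 (fderiv ℝ I) Ω := hI.fderiv_of_isOpen hΩ (by norm_num)
  have hHd : HasFDerivAt (fderiv ℝ I) (fderiv ℝ (fderiv ℝ I) p) p :=
    ((hF.differentiableOn one_ne_zero).differentiableAt hpΩ).hasFDerivAt
  have hsym : fderiv ℝ (fderiv ℝ I) p (1, 0) (0, 1) =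
      fderiv ℝ (fderiv ℝ I) p (0, 1) (1, 0) :=
    (hI.contDiffAt hpΩ).isSymmSndFDerivAt (by norm_num) (1, 0) (0, 1)
  have eα1 := fderiv_dDir_apply α I p (1, 0) hαd hHd
  have eα2 := fderiv_dDir_apply α I p (0, 1) hαd hHd
  have eθ1 := fderiv_dDir_apply θ I p (1, 0) hθd hHd
  have eθ2 := fderiv_dDir_apply θ I p (0, 1) hθd hHd
  have hs := hsin p hp
  have hpα : Real.sin (α p) ^ 2 + Real.cos (α p) ^ 2 = 1 := Real.sin_sq_add_cos_sq (α p)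
  have hpθ : Real.sin (θ p) ^ 2 + Real.cos (θ p) ^ 2 = 1 := Real.sin_sq_add_cos_sq (θ p)
  have hcs : Real.cos (α p - θ p) = Real.cos (α p) * Real.cos (θ p) +
      Real.sin (α p) * Real.sin (θ p) := Real.cos_sub _ _
  have hss : Real.sin (α p - θ p) = Real.sin (α p) * Real.cos (θ p) -
      Real.cos (α p) * Real.sin (θ p) := Real.sin_sub _ _
  have h1 : Real.sin (α p - θ p) *
        (-Real.sin (α p) * fderiv ℝ I p (1, 0) + Real.cos (α p) * fderiv ℝ I p (0, 1)) =
      Real.cos (α p - θ p) *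
          (Real.cos (α p) * fderiv ℝ I p (1, 0) + Real.sin (α p) * fderiv ℝ I p (0, 1)) -
        (Real.cos (θ p) * fderiv ℝ I p (1, 0) + Real.sin (θ p) * fderiv ℝ I p (0, 1)) := by
    rw [hcs, hss]
    linear_combination (-(Real.cos (θ p) * fderiv ℝ I p (1, 0)) -
      Real.sin (θ p) * fderiv ℝ I p (0, 1)) * hpα
  have h2 : Real.sin (α p - θ p) *
        (-Real.sin (θ p) * fderiv ℝ I p (1, 0) + Real.cos (θ p) * fderiv ℝ I p (0, 1)) =
      (Real.cos (α p) * fderiv ℝ I p (1, 0) + Real.sin (α p) * fderiv ℝ I p (0, 1)) -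
        Real.cos (α p - θ p) *
          (Real.cos (θ p) * fderiv ℝ I p (1, 0) + Real.sin (θ p) * fderiv ℝ I p (0, 1)) := by
    rw [hcs, hss]
    linear_combination (Real.cos (α p) * fderiv ℝ I p (1, 0) +
      Real.sin (α p) * fderiv ℝ I p (0, 1)) * hpθ
  simp only [dDir, px, py]
  rw [eα1, eα2, eθ1, eθ2, hsym, one_div, inv_mul_eq_div, eq_div_iff hs]
  linear_combination
    (Real.cos (θ p) * fderiv ℝ α p (1, 0) + Real.sin (θ p) * fderiv ℝ α p (0, 1)) * h1 -
    (Real.cos (α p) * fderiv ℝ θ p (1, 0) + Real.sin (α p) * fderiv ℝ θ p (0, 1)) * h2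
end

section
/- Let x₁ < x₂, u₀ ∈ C⁴([x₁,x₂]) and u₁ ∈ C³([x₁,x₂]). Then there exists δ̄ ∈ (0, (9(x₂−x₁)²/16)^{1/3}] such that, with D̄_δ̄ = {(x,y) : −δ̄ ≤ y ≤ 0, x₁ + (2/3)(−y)^{3/2} ≤ x ≤ x₂ − (2/3)(−y)^{3/2}}, there is a function u : D̄_δ̄ → ℝ which is C¹ on D̄_δ̄ and C² on D̄_δ̄ ∩ {y < 0}, satisfies the Tricomi equation y·u_xx + u_yy = 0 at every point of D̄_δ̄ with y < 0, and satisfies the boundary conditions u(x,0) = u₀(x) and u_y(x,0) = u₁(x) for all x ∈ [x₁,x₂]. -/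
open Real Set

/-- The region bounded by the two characteristics of the Tricomi equation through
`(x₁,0)` and `(x₂,0)` and the degenerate line `y = 0`, truncated at depth `δ`.
Points are `p = (x, y)`. -/
def DbarT (x₁ x₂ δ : ℝ) : Set (ℝ × ℝ) :=
  {p | -δ ≤ p.2 ∧ p.2 ≤ 0 ∧
    x₁ + (2 / 3) * (-p.2) ^ ((3 : ℝ) / 2) ≤ p.1 ∧
    p.1 ≤ x₂ - (2 / 3) * (-p.2) ^ ((3 : ℝ) / 2)}

open MeasureTheory

section TricomiAux


theorem extend_Icc (n : ℕ) {a b : ℝ} (hab : a < b) : ∀ {f : ℝ → ℝ},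
    ContDiffOn ℝ n f (Icc a b) → ∃ F : ℝ → ℝ, ContDiff ℝ n F ∧ EqOn F f (Icc a b) := by
  induction n with
  | zero =>
    intro f hf
    refine ⟨fun x => f (max a (min x b)), ?_, ?_⟩
    · rw [show ((0:ℕ) : WithTop ℕ∞) = 0 by rfl, contDiff_zero]
      refine hf.continuousOn.comp_continuous
        (continuous_const.max (continuous_id.min continuous_const)) (fun x => ?_)
      constructor
      · exact le_max_left _ _
      · exact max_le hab.le (min_le_right _ _)
    · intro x hx
      simp only
      rw [min_eq_left hx.2, max_eq_right hx.1]
  | succ n ih =>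
    intro f hf
    have hudiff : UniqueDiffOn ℝ (Icc a b) := uniqueDiffOn_Icc hab
    have hf' : ContDiffOn ℝ n (derivWithin f (Icc a b)) (Icc a b) := by
      apply hf.derivWithin hudiff
      rw [show ((n+1 : ℕ) : WithTop ℕ∞) = (n : WithTop ℕ∞) + 1 by push_cast; ring]
    obtain ⟨G, hG, hGeq⟩ := ih hf'
    have hGc : Continuous G := hG.continuous
    refine ⟨fun x => f a + ∫ t in a..x, G t, ?_, ?_⟩
    · have hd : ∀ x : ℝ, HasDerivAt (fun x => f a + ∫ t in a..x, G t) (G x) x := by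
        intro x
        exact (intervalIntegral.integral_hasDerivAt_right
          (hGc.intervalIntegrable _ _) hGc.aestronglyMeasurable.stronglyMeasurableAtFilter
          hGc.continuousAt).const_add _
      rw [show ((n+1 : ℕ) : WithTop ℕ∞) = (n : WithTop ℕ∞) + 1 by push_cast; ring,
        contDiff_succ_iff_deriv]
      refine ⟨fun x => (hd x).differentiableAt, by simp, ?_⟩
      have : deriv (fun x => f a + ∫ t in a..x, G t) = G := funext fun x => (hd x).deriv
      rw [this]; exact hG
    · intro x hx
      have h1 : ∫ t in a..x, G t = f x - f a := by
        apply intervalIntegral.integral_eq_sub_of_hasDeriv_right_of_le hx.1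
          (hf.continuousOn.mono (Icc_subset_Icc le_rfl hx.2))
        · intro t ht
          have htm : t ∈ Icc a b := ⟨ht.1.le, le_trans ht.2.le hx.2⟩
          have hdw : HasDerivWithinAt f (derivWithin f (Icc a b) t) (Icc a b) t := by
            apply DifferentiableWithinAt.hasDerivWithinAt
            exact (hf.differentiableOn (by
              rw [show ((n+1 : ℕ) : WithTop ℕ∞) = (n : WithTop ℕ∞) + 1 by push_cast; ring]
              simp)) t htm
          have hda : HasDerivAt f (derivWithin f (Icc a b) t) t :=
            hdw.hasDerivAt (Icc_mem_nhds ht.1 (lt_of_lt_of_le ht.2 hx.2))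
          rw [hGeq htm]
          exact hda.hasDerivWithinAt
        · exact hGc.intervalIntegrable _ _
      simp only []
      rw [h1]; ring


lemma contOn_w {c : ℝ} : ContinuousOn (fun t : ℝ => (1 - t^2) ^ c) (Ioo (-1:ℝ) 1) := by
  apply ContinuousOn.rpow_const
  · fun_prop
  · intro t ht
    left
    nlinarith [ht.1, ht.2]

lemma pos_w {c : ℝ} {t : ℝ} (ht : t ∈ Ioo (-1:ℝ) 1) : 0 < (1 - t^2) ^ c := by
  apply rpow_pos_of_pos
  nlinarith [ht.1, ht.2]

lemma integrableOn_w {c : ℝ} (hc1 : -1 < c) (hc0 : c ≤ 0) :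
    IntegrableOn (fun t : ℝ => (1 - t^2) ^ c) (Ioo (-1:ℝ) 1) := by
  have base : IntervalIntegrable (fun x : ℝ => x ^ c) volume 0 1 :=
    intervalIntegral.intervalIntegrable_rpow' hc1
  have h2 : IntegrableOn (fun t : ℝ => (1 - t) ^ c) (Ioc (0:ℝ) 1) := by
    have := (base.comp_sub_left 1)
    simp only [sub_zero, sub_self] at this
    exact (intervalIntegrable_iff_integrableOn_Ioc_of_le zero_le_one).1 this.symm
  have h1 : IntegrableOn (fun t : ℝ => (1 + t) ^ c) (Ioc (-1:ℝ) 0) := by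
    have := (base.comp_add_right 1)
    simp only [zero_sub, sub_self] at this
    have h := (intervalIntegrable_iff_integrableOn_Ioc_of_le (by norm_num : (-1:ℝ) ≤ 0)).1 this
    simpa [add_comm] using h
  have hu : Ioo (-1:ℝ) 1 = Ioc (-1:ℝ) 0 ∪ Ioo (0:ℝ) 1 := by
    rw [Set.Ioc_union_Ioo_eq_Ioo (by norm_num) (by norm_num)]
  rw [hu]
  apply IntegrableOn.union
  · apply Integrable.mono' h1
    · apply ContinuousOn.aestronglyMeasurable _ measurableSet_Ioc
      apply ContinuousOn.rpow_const (by fun_prop)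
      intro t ht
      left; nlinarith [ht.1, ht.2]
    · rw [ae_restrict_iff' measurableSet_Ioc]
      apply ae_of_all
      intro t ht
      rw [Real.norm_eq_abs, abs_of_nonneg (rpow_nonneg (by nlinarith [ht.1, ht.2]) c)]
      apply rpow_le_rpow_of_nonpos (by nlinarith [ht.1, ht.2]) (by nlinarith [ht.1, ht.2]) hc0
  · apply Integrable.mono' (h2.mono_set Set.Ioo_subset_Ioc_self)
    · apply ContinuousOn.aestronglyMeasurable _ measurableSet_Ioo
      apply ContinuousOn.rpow_const (by fun_prop)
      intro t ht
      left; nlinarith [ht.1, ht.2]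
    · rw [ae_restrict_iff' measurableSet_Ioo]
      apply ae_of_all
      intro t ht
      rw [Real.norm_eq_abs, abs_of_nonneg (rpow_nonneg (by nlinarith [ht.1, ht.2]) c)]
      apply rpow_le_rpow_of_nonpos (by nlinarith [ht.1, ht.2]) (by nlinarith [ht.1, ht.2]) hc0

lemma integrableOn_mul_w {c : ℝ} (hc1 : -1 < c) (hc0 : c ≤ 0) {g : ℝ → ℝ} {C : ℝ}
    (hg : ContinuousOn g (Ioo (-1:ℝ) 1)) (hC : ∀ t ∈ Ioo (-1:ℝ) 1, |g t| ≤ C) :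
    IntegrableOn (fun t => g t * (1 - t^2) ^ c) (Ioo (-1:ℝ) 1) := by
  apply Integrable.mono' ((integrableOn_w hc1 hc0).const_mul C)
  · exact (hg.mul contOn_w).aestronglyMeasurable measurableSet_Ioo
  · rw [ae_restrict_iff' measurableSet_Ioo]
    apply ae_of_all
    intro t ht
    rw [Real.norm_eq_abs, abs_mul, abs_of_nonneg (pos_w ht).le]
    exact mul_le_mul_of_nonneg_right (hC t ht) (pos_w ht).le

lemma pos_intw {c : ℝ} (hc1 : -1 < c) (hc0 : c ≤ 0) :
    0 < ∫ t in Ioo (-1:ℝ) 1, (1 - t^2) ^ c := by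
  rw [setIntegral_pos_iff_support_of_nonneg_ae]
  · rw [show (Function.support fun t : ℝ => (1-t^2)^c) ∩ Ioo (-1:ℝ) 1 = Ioo (-1:ℝ) 1 by
      apply inter_eq_self_of_subset_right
      intro t ht
      exact (pos_w ht).ne']
    simp [Real.volume_Ioo]
  · rw [Filter.EventuallyLE, ae_restrict_iff' measurableSet_Ioo]
    apply ae_of_all
    intro t ht
    exact (pos_w ht).le
  · exact integrableOn_w hc1 hc0

noncomputable section

def PI (φ : ℝ → ℝ) (c : ℝ) (m : ℕ) (p : ℝ × ℝ) : ℝ :=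
  ∫ t in Ioo (-1:ℝ) 1, φ (p.1 + p.2 * t) * t ^ m * (1 - t^2) ^ c

def fstL : ℝ × ℝ →L[ℝ] ℝ := ContinuousLinearMap.fst ℝ ℝ ℝ
def sndL : ℝ × ℝ →L[ℝ] ℝ := ContinuousLinearMap.snd ℝ ℝ ℝ

@[simp] lemma fstL_apply (v : ℝ × ℝ) : fstL v = v.1 := rfl
@[simp] lemma sndL_apply (v : ℝ × ℝ) : sndL v = v.2 := rfl

lemma bound_compact {φ : ℝ → ℝ} (hφ : Continuous φ) (R : ℝ) :
    ∃ C : ℝ, 0 ≤ C ∧ ∀ z : ℝ, |z| ≤ R → |φ z| ≤ C := by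
  obtain ⟨C, hC⟩ := (isCompact_Icc (a := -R) (b := R)).exists_bound_of_continuousOn
    hφ.continuousOn
  refine ⟨max C 0, le_max_right _ _, fun z hz => ?_⟩
  have : z ∈ Icc (-R) R := ⟨by linarith [neg_abs_le z], by linarith [le_abs_self z]⟩
  exact le_trans (hC z this) (le_max_left _ _)

lemma arg_bound {p : ℝ × ℝ} {x : ℝ × ℝ} (hx : x ∈ Metric.ball p 1) {t : ℝ}
    (ht : |t| ≤ 1) : |x.1 + x.2 * t| ≤ |p.1| + |p.2| + 2 := by
  have hd : ‖x - p‖ < 1 := by rwa [← dist_eq_norm, ← Metric.mem_ball]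
  have h1 : |x.1 - p.1| ≤ ‖x - p‖ := norm_fst_le (x - p)
  have h2 : |x.2 - p.2| ≤ ‖x - p‖ := norm_snd_le (x - p)
  have hx1 : |x.1| ≤ |p.1| + 1 := by
    have := abs_sub_abs_le_abs_sub x.1 p.1
    linarith
  have hx2 : |x.2| ≤ |p.2| + 1 := by
    have := abs_sub_abs_le_abs_sub x.2 p.2
    linarith
  calc |x.1 + x.2 * t| ≤ |x.1| + |x.2| * |t| := by rw [← abs_mul]; exact abs_add_le _ _
    _ ≤ |p.1| + |p.2| + 2 := by nlinarith [abs_nonneg x.2, abs_nonneg t]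

lemma integrableOn_PI {φ : ℝ → ℝ} (hφ : Continuous φ) {c : ℝ} (hc1 : -1 < c) (hc0 : c ≤ 0)
    (m : ℕ) (p : ℝ × ℝ) :
    IntegrableOn (fun t => φ (p.1 + p.2 * t) * t ^ m * (1 - t^2) ^ c) (Ioo (-1:ℝ) 1) := by
  obtain ⟨C, _, hC⟩ := bound_compact hφ (|p.1| + |p.2|)
  have : IntegrableOn (fun t => (φ (p.1 + p.2 * t) * t ^ m) * (1 - t^2) ^ c)
      (Ioo (-1:ℝ) 1) := by
    apply integrableOn_mul_w hc1 hc0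
    · exact ((hφ.comp (by fun_prop)).mul (by fun_prop)).continuousOn
    · intro t ht
      have htle : |t| ≤ 1 := abs_le.2 ⟨ht.1.le, ht.2.le⟩
      rw [abs_mul, abs_pow]
      have h1 : |φ (p.1 + p.2 * t)| ≤ C := by
        apply hC
        calc |p.1 + p.2 * t| ≤ |p.1| + |p.2| * |t| := by rw [← abs_mul]; exact abs_add_le _ _
          _ ≤ |p.1| + |p.2| := by nlinarith [abs_nonneg p.2]
      have h2 : |t| ^ m ≤ 1 := pow_le_one₀ (abs_nonneg t) htle
      calc |φ (p.1 + p.2 * t)| * |t| ^ m ≤ C * 1 :=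
        mul_le_mul h1 h2 (by positivity) (le_trans (abs_nonneg _) h1)
        _ = C := mul_one C
  simpa [mul_assoc] using this

lemma PI_hasFDerivAt {φ : ℝ → ℝ} (hφ : ContDiff ℝ 1 φ) {c : ℝ} (hc1 : -1 < c) (hc0 : c ≤ 0)
    (m : ℕ) (p : ℝ × ℝ) :
    HasFDerivAt (PI φ c m)
      ((PI (deriv φ) c m p) • fstL + (PI (deriv φ) c (m + 1) p) • sndL) p := by
  have hφc : Continuous φ := hφ.continuous
  have hφ' : Continuous (deriv φ) := by
    have := (contDiff_succ_iff_deriv (n := 0)).1 (by exact_mod_cast hφ)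
    exact this.2.2.continuous
  obtain ⟨C, hC0, hC⟩ := bound_compact hφ' (|p.1| + |p.2| + 2)
  set μ := volume.restrict (Ioo (-1:ℝ) 1) with hμ
  set F' : (ℝ × ℝ) → ℝ → (ℝ × ℝ →L[ℝ] ℝ) := fun x t =>
    (deriv φ (x.1 + x.2 * t) * t ^ m * (1 - t^2) ^ c) • fstL +
    (deriv φ (x.1 + x.2 * t) * t ^ (m+1) * (1 - t^2) ^ c) • sndL with hF'
  have key : HasFDerivAt (fun x : ℝ × ℝ => ∫ t, φ (x.1 + x.2 * t) * t ^ m * (1 - t^2) ^ c ∂μ)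
      (∫ t, F' p t ∂μ) p := by
    apply hasFDerivAt_integral_of_dominated_of_fderiv_le (hs := Metric.ball_mem_nhds p one_pos)
      (bound := fun t => (2 * C) * (1 - t^2) ^ c)
    · apply Filter.Eventually.of_forall
      intro x
      exact (((hφc.comp (by fun_prop)).mul (by fun_prop)).continuousOn.mul
        contOn_w).aestronglyMeasurable measurableSet_Ioo
    · exact integrableOn_PI hφc hc1 hc0 m p
    · apply AEStronglyMeasurable.add <;>
      · apply AEStronglyMeasurable.smul_const
        exact (((hφ'.comp (by fun_prop)).mul (by fun_prop)).continuousOn.mul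
          contOn_w).aestronglyMeasurable measurableSet_Ioo
    · rw [hμ, ae_restrict_iff' measurableSet_Ioo]
      apply ae_of_all
      intro t ht x hx
      have htle : |t| ≤ 1 := abs_le.2 ⟨ht.1.le, ht.2.le⟩
      have harg : |deriv φ (x.1 + x.2 * t)| ≤ C := hC _ (arg_bound hx htle)
      have hw : (0:ℝ) < (1 - t^2) ^ c := pos_w ht
      have hb : ∀ k : ℕ, ‖(deriv φ (x.1 + x.2 * t) * t ^ k * (1 - t^2) ^ c)‖ ≤
          C * (1 - t^2) ^ c := by
        intro k
        rw [Real.norm_eq_abs, abs_mul, abs_mul, abs_pow,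
          abs_of_nonneg hw.le]
        have h2 : |t| ^ k ≤ 1 := pow_le_one₀ (abs_nonneg t) htle
        have : |deriv φ (x.1 + x.2 * t)| * |t| ^ k ≤ C :=
          le_trans (mul_le_mul harg h2 (by positivity) (le_trans (abs_nonneg _) harg))
            (by rw [mul_one])
        exact mul_le_mul_of_nonneg_right this hw.le
      have hb' : ∀ k : ℕ, |deriv φ (x.1 + x.2 * t) * t ^ k * (1 - t^2) ^ c| ≤
          C * (1 - t^2) ^ c := fun k => by rw [← Real.norm_eq_abs]; exact hb k
      apply ContinuousLinearMap.opNorm_le_bound _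
        (mul_nonneg (by linarith) hw.le)
      intro v
      have hv1 : |v.1| ≤ ‖v‖ := norm_fst_le v
      have hv2 : |v.2| ≤ ‖v‖ := norm_snd_le v
      have hFv : F' x t v = (deriv φ (x.1 + x.2 * t) * t ^ m * (1 - t^2) ^ c) * v.1 +
          (deriv φ (x.1 + x.2 * t) * t ^ (m+1) * (1 - t^2) ^ c) * v.2 := by
        simp [hF']
      rw [hFv, Real.norm_eq_abs]
      calc |(deriv φ (x.1 + x.2 * t) * t ^ m * (1 - t^2) ^ c) * v.1 +
          (deriv φ (x.1 + x.2 * t) * t ^ (m+1) * (1 - t^2) ^ c) * v.2| ≤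
          |deriv φ (x.1 + x.2 * t) * t ^ m * (1 - t^2) ^ c| * |v.1| +
          |deriv φ (x.1 + x.2 * t) * t ^ (m+1) * (1 - t^2) ^ c| * |v.2| := by
            refine le_trans (abs_add_le _ _) ?_
            rw [abs_mul (deriv φ (x.1 + x.2 * t) * t ^ m * (1 - t^2) ^ c) v.1,
              abs_mul (deriv φ (x.1 + x.2 * t) * t ^ (m+1) * (1 - t^2) ^ c) v.2]
        _ ≤ (C * (1 - t^2) ^ c) * ‖v‖ + (C * (1 - t^2) ^ c) * ‖v‖ := by
            apply add_le_add <;> apply mul_le_mul _ _ (abs_nonneg _)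
              (mul_nonneg hC0 hw.le)
            · exact hb' m
            · exact hv1
            · exact hb' (m+1)
            · exact hv2
        _ = (2 * C) * (1 - t^2) ^ c * ‖v‖ := by ring
    · exact (integrableOn_w hc1 hc0).const_mul _
    · rw [hμ, ae_restrict_iff' measurableSet_Ioo]
      apply ae_of_all
      intro t ht x hx
      have hl : HasFDerivAt (fun x : ℝ × ℝ => x.1 + x.2 * t) (fstL + t • sndL) x := by
        have h1 : HasFDerivAt (fun x : ℝ × ℝ => x.1) fstL x := hasFDerivAt_fst
        have h2 : HasFDerivAt (fun x : ℝ × ℝ => x.2) sndL x := hasFDerivAt_snd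
        exact h1.add (h2.mul_const t)
      have hcomp : HasFDerivAt (fun x : ℝ × ℝ => φ (x.1 + x.2 * t))
          ((deriv φ (x.1 + x.2 * t)) • (fstL + t • sndL)) x :=
        (hφ.differentiable one_ne_zero (x.1 + x.2 * t)).hasDerivAt.comp_hasFDerivAt x hl
      have hmul := (hcomp.mul_const (t ^ m)).mul_const ((1 - t^2) ^ c)
      refine hmul.congr_fderiv (Eq.symm ?_)
      apply ContinuousLinearMap.ext
      intro v
      simp [hF', ContinuousLinearMap.smul_apply, pow_succ]
      ring
  have heq : (∫ t, F' p t ∂μ) =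
      (PI (deriv φ) c m p) • fstL + (PI (deriv φ) c (m + 1) p) • sndL := by
    rw [hF']
    rw [integral_add ((integrableOn_PI hφ' hc1 hc0 m p).smul_const fstL)
      ((integrableOn_PI hφ' hc1 hc0 (m+1) p).smul_const sndL),
      integral_smul_const, integral_smul_const]
    rfl
  rw [← heq]
  exact key

lemma PI_differentiable {φ : ℝ → ℝ} (hφ : ContDiff ℝ 1 φ) {c : ℝ} (hc1 : -1 < c) (hc0 : c ≤ 0)
    (m : ℕ) : Differentiable ℝ (PI φ c m) :=
  fun p => (PI_hasFDerivAt hφ hc1 hc0 m p).differentiableAt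

lemma PI_fderiv {φ : ℝ → ℝ} (hφ : ContDiff ℝ 1 φ) {c : ℝ} (hc1 : -1 < c) (hc0 : c ≤ 0)
    (m : ℕ) : fderiv ℝ (PI φ c m) = fun p =>
      (PI (deriv φ) c m p) • fstL + (PI (deriv φ) c (m + 1) p) • sndL :=
  funext fun p => (PI_hasFDerivAt hφ hc1 hc0 m p).fderiv

lemma PI_contDiff_one {φ : ℝ → ℝ} (hφ : ContDiff ℝ 2 φ) {c : ℝ} (hc1 : -1 < c) (hc0 : c ≤ 0)
    (m : ℕ) : ContDiff ℝ 1 (PI φ c m) := by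
  have hφ1 : ContDiff ℝ 1 φ := hφ.of_le (by exact_mod_cast Nat.le_succ 1)
  have hφ' : ContDiff ℝ 1 (deriv φ) := by
    have := (contDiff_succ_iff_deriv (n := 1)).1 (by exact_mod_cast hφ)
    exact this.2.2
  rw [contDiff_one_iff_fderiv]
  refine ⟨PI_differentiable hφ1 hc1 hc0 m, ?_⟩
  rw [PI_fderiv hφ1 hc1 hc0 m]
  exact (((PI_differentiable hφ' hc1 hc0 m).continuous).smul continuous_const).add
    (((PI_differentiable hφ' hc1 hc0 (m+1)).continuous).smul continuous_const)

lemma PI_contDiff_two {φ : ℝ → ℝ} (hφ : ContDiff ℝ 3 φ) {c : ℝ} (hc1 : -1 < c) (hc0 : c ≤ 0)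
    (m : ℕ) : ContDiff ℝ 2 (PI φ c m) := by
  have hφ1 : ContDiff ℝ 1 φ := hφ.of_le (by norm_cast)
  have hφ' : ContDiff ℝ 2 (deriv φ) := by
    have := (contDiff_succ_iff_deriv (n := 2)).1 (by exact_mod_cast hφ)
    exact this.2.2
  rw [show (2 : WithTop ℕ∞) = 1 + 1 from rfl, contDiff_succ_iff_fderiv]
  refine ⟨PI_differentiable hφ1 hc1 hc0 m, by simp, ?_⟩
  rw [PI_fderiv hφ1 hc1 hc0 m]
  exact ((PI_contDiff_one hφ' hc1 hc0 m).smul contDiff_const).add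
    ((PI_contDiff_one hφ' hc1 hc0 (m+1)).smul contDiff_const)

lemma EPD {φ : ℝ → ℝ} (hφ : ContDiff ℝ 2 φ) {c : ℝ} (hc1 : -1 < c) (hc0 : c < 0)
    (p : ℝ × ℝ) (hs : p.2 ≠ 0) :
    p.2 * (PI (deriv (deriv φ)) c 2 p - PI (deriv (deriv φ)) c 0 p)
      + 2 * (c + 1) * PI (deriv φ) c 1 p = 0 := by
  obtain ⟨x, s⟩ := p
  simp only at hs ⊢
  set ψ := deriv φ with hψdef
  have hψ : ContDiff ℝ 1 ψ := by
    have := (contDiff_succ_iff_deriv (n := 1)).1 (by exact_mod_cast hφ)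
    exact this.2.2
  have hψc : Continuous ψ := hψ.continuous
  have hψ' : Continuous (deriv ψ) := by
    have := (contDiff_succ_iff_deriv (n := 0)).1 (by exact_mod_cast hψ)
    exact this.2.2.continuous
  have hne : ∀ t : ℝ, t ∈ Ioo (-1:ℝ) 1 → (1 - t^2) ≠ 0 := by
    intro t ht; nlinarith [ht.1, ht.2]
  have hpos : ∀ t : ℝ, t ∈ Ioo (-1:ℝ) 1 → (0:ℝ) < 1 - t^2 := by
    intro t ht; nlinarith [ht.1, ht.2]
  -- the function H and its derivative
  set H : ℝ → ℝ := fun t => ψ (x + s * t) * (1 - t^2) ^ (c + 1) with hH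
  set H' : ℝ → ℝ := fun t =>
    deriv ψ (x + s * t) * s * (1 - t^2) ^ (c + 1) +
    ψ (x + s * t) * ((c + 1) * (1 - t^2) ^ c * (-(2 * t))) with hH'
  have hcont : ContinuousOn H (Icc (-1:ℝ) 1) := by
    apply ContinuousOn.mul
    · exact (hψc.comp (by fun_prop)).continuousOn
    · apply ContinuousOn.rpow_const (by fun_prop)
      intro t _; right; linarith
  have hderiv : ∀ t ∈ Ioo (-1:ℝ) 1, HasDerivAt H (H' t) t := by
    intro t ht
    have h1 : HasDerivAt (fun t : ℝ => x + s * t) s t := by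
      simpa using ((hasDerivAt_id t).const_mul s).const_add x
    have h2 : HasDerivAt (fun t : ℝ => ψ (x + s * t)) (deriv ψ (x + s * t) * s) t :=
      ((hψ.differentiable one_ne_zero _).hasDerivAt).comp t h1
    have h3 : HasDerivAt (fun t : ℝ => 1 - t^2) (-(2 * t)) t := by
      simpa using (hasDerivAt_pow 2 t).const_sub 1
    have h4 : HasDerivAt (fun t : ℝ => (1 - t^2) ^ (c+1))
        ((c+1) * (1 - t^2) ^ c * (-(2 * t))) t := by
      have hr := Real.hasDerivAt_rpow_const (x := 1 - t^2) (p := c+1)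
        (Or.inl (hne t ht))
      have := hr.comp t h3
      simpa [add_sub_cancel_right, Function.comp_def] using this
    simpa [hH, hH', Pi.mul_def] using h2.mul h4
  have hint1 : IntegrableOn (fun t => deriv ψ (x + s * t) * s * (1 - t^2) ^ (c + 1))
      (Ioo (-1:ℝ) 1) := by
    have : ContinuousOn (fun t => deriv ψ (x + s * t) * s * (1 - t^2) ^ (c + 1))
        (Icc (-1:ℝ) 1) := by
      apply ContinuousOn.mul
      · exact ((hψ'.comp (by fun_prop)).mul continuous_const).continuousOn
      · apply ContinuousOn.rpow_const (by fun_prop)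
        intro t _; right; linarith
    exact (this.integrableOn_Icc).mono_set Ioo_subset_Icc_self
  have hint2 : IntegrableOn (fun t => ψ (x + s * t) * ((c + 1) * (1 - t^2) ^ c * (-(2 * t))))
      (Ioo (-1:ℝ) 1) := by
    obtain ⟨C, hC0, hC⟩ := bound_compact hψc (|x| + |s|)
    have : IntegrableOn (fun t => (ψ (x + s * t) * ((c+1) * (-(2 * t)))) * (1 - t^2) ^ c)
        (Ioo (-1:ℝ) 1) := by
      apply integrableOn_mul_w hc1 hc0.le
      · exact ((hψc.comp (by fun_prop)).mul (by fun_prop)).continuousOn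
      · intro t ht
        have htle : |t| ≤ 1 := abs_le.2 ⟨ht.1.le, ht.2.le⟩
        have hb : |ψ (x + s * t)| ≤ C := by
          apply hC
          calc |x + s * t| ≤ |x| + |s| * |t| := by rw [← abs_mul]; exact abs_add_le _ _
            _ ≤ |x| + |s| := by nlinarith [abs_nonneg s]
        rw [abs_mul]
        have h2 : |(c+1) * (-(2 * t))| ≤ |c+1| * 2 := by
          rw [abs_mul]
          have : |(-(2 * t))| ≤ 2 := by rw [abs_neg, abs_mul]; simp; linarith [htle]
          nlinarith [abs_nonneg (c+1)]
        calc |ψ (x + s * t)| * |(c+1) * (-(2 * t))| ≤ C * (|c+1| * 2) := by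
              apply mul_le_mul hb h2 (abs_nonneg _) hC0
          _ = C * (|c+1| * 2) := rfl
    exact this.congr_fun (fun t ht => by ring) measurableSet_Ioo
  have hb0 : (0:ℝ) < c + 1 := by linarith
  have hFTC : (∫ t in Ioo (-1:ℝ) 1, H' t) = 0 := by
    have h01 : (∫ t in (-1:ℝ)..1, H' t) = H 1 - H (-1) := by
      apply intervalIntegral.integral_eq_sub_of_hasDeriv_right_of_le (by norm_num) hcont
        (fun t ht => (hderiv t ht).hasDerivWithinAt)
      exact (intervalIntegrable_iff_integrableOn_Ioo_of_le (by norm_num)).2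
        (hint1.add hint2)
    rw [intervalIntegral.integral_of_le (by norm_num : (-1:ℝ) ≤ 1),
      integral_Ioc_eq_integral_Ioo] at h01
    rw [h01, hH]
    have e1 : (1 - (1:ℝ)^2) = 0 := by norm_num
    have e2 : (1 - (-1:ℝ)^2) = 0 := by norm_num
    simp only [e1, e2, Real.zero_rpow hb0.ne', mul_zero, sub_zero]
  have hsplit : (∫ t in Ioo (-1:ℝ) 1, deriv ψ (x + s * t) * s * (1 - t^2) ^ (c + 1)) =
      - ∫ t in Ioo (-1:ℝ) 1, ψ (x + s * t) * ((c + 1) * (1 - t^2) ^ c * (-(2 * t))) := by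
    have := integral_add hint1 hint2
    have h0 : (∫ t in Ioo (-1:ℝ) 1, (deriv ψ (x + s * t) * s * (1 - t^2) ^ (c + 1) +
        ψ (x + s * t) * ((c + 1) * (1 - t^2) ^ c * (-(2 * t))))) = 0 := hFTC
    rw [this] at h0
    linarith
  have hPI2 : PI (deriv ψ) c 2 (x, s) - PI (deriv ψ) c 0 (x, s) =
      ∫ t in Ioo (-1:ℝ) 1, deriv ψ (x + s * t) * (t^2 - 1) * (1 - t^2) ^ c := by
    rw [PI, PI, ← integral_sub (integrableOn_PI hψ' hc1 hc0.le 2 (x, s))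
      (integrableOn_PI hψ' hc1 hc0.le 0 (x, s))]
    apply setIntegral_congr_fun measurableSet_Ioo
    intro t ht
    simp only
    ring
  have hstep : s * (PI (deriv ψ) c 2 (x, s) - PI (deriv ψ) c 0 (x, s)) =
      - ∫ t in Ioo (-1:ℝ) 1, deriv ψ (x + s * t) * s * (1 - t^2) ^ (c + 1) := by
    rw [hPI2, ← integral_const_mul, ← integral_neg]
    apply setIntegral_congr_fun measurableSet_Ioo
    intro t ht
    simp only
    have : (1 - t^2) ^ (c + 1) = (1 - t^2) ^ c * (1 - t^2) := Real.rpow_add_one (hne t ht) c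
    rw [this]
    ring
  have hlast : (∫ t in Ioo (-1:ℝ) 1, ψ (x + s * t) * ((c + 1) * (1 - t^2) ^ c * (-(2 * t)))) =
      (-2 * (c + 1)) * PI ψ c 1 (x, s) := by
    rw [PI, ← integral_const_mul]
    apply setIntegral_congr_fun measurableSet_Ioo
    intro t ht
    simp only
    ring
  rw [hstep, hsplit, neg_neg, hlast]
  ring

def sig (y : ℝ) : ℝ := -(2/3) * (y * Real.sqrt |y|)

lemma sig_nonneg_of_nonpos {y : ℝ} (hy : y ≤ 0) : 0 ≤ sig y := by
  rw [sig]
  have := Real.sqrt_nonneg |y|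
  nlinarith

lemma sig_eq_rpow {y : ℝ} (hy : y ≤ 0) : (2/3) * (-y) ^ ((3:ℝ)/2) = sig y := by
  rcases eq_or_lt_of_le hy with h | h
  · subst h
    simp [sig, Real.zero_rpow (by norm_num : ((3:ℝ)/2) ≠ 0)]
  · have hpos : 0 < -y := by linarith
    have h32 : (-y : ℝ) ^ ((3:ℝ)/2) = (-y) * Real.sqrt (-y) := by
      rw [show ((3:ℝ)/2) = 1 + 1/2 by norm_num, Real.rpow_add hpos, Real.rpow_one,
        ← Real.sqrt_eq_rpow]
    rw [h32, sig, abs_of_nonpos hy]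
    ring

lemma sig_hasDerivAt (y : ℝ) : HasDerivAt sig (-Real.sqrt |y|) y := by
  rcases lt_trichotomy y 0 with hy | hy | hy
  · have hev : sig =ᶠ[nhds y] fun z => -(2/3) * (z * Real.sqrt (-z)) := by
      filter_upwards [eventually_lt_nhds hy] with z hz
      rw [sig, abs_of_nonpos hz.le]
    have hsq : HasDerivAt (fun z : ℝ => Real.sqrt (-z)) (1 / (2 * Real.sqrt (-y)) * (-1)) y := by
      have h1 : HasDerivAt (fun z : ℝ => -z) (-1) y := (hasDerivAt_id y).neg
      exact (Real.hasDerivAt_sqrt (by linarith : -y ≠ 0)).comp y h1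
    have hmul : HasDerivAt (fun z : ℝ => -(2/3) * (z * Real.sqrt (-z)))
        (-(2/3) * (1 * Real.sqrt (-y) + y * (1 / (2 * Real.sqrt (-y)) * (-1)))) y :=
      ((hasDerivAt_id y).mul hsq).const_mul _
    have hs : Real.sqrt (-y) * Real.sqrt (-y) = -y :=
      Real.mul_self_sqrt (by linarith)
    have hsne : Real.sqrt (-y) ≠ 0 := (Real.sqrt_pos.2 (by linarith)).ne'
    have hfin := hmul.congr_of_eventuallyEq hev
    refine hfin.congr_deriv (Eq.symm ?_)
    rw [abs_of_nonpos hy.le]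
    field_simp
    nlinarith [hs]
  · subst hy
    have h0 : sig 0 = 0 := by simp [sig]
    rw [hasDerivAt_iff_isLittleO]
    simp only [h0, abs_zero, Real.sqrt_zero, neg_zero, smul_zero, sub_zero]
    rw [Asymptotics.isLittleO_iff]
    intro c hc
    have htend : Filter.Tendsto (fun h : ℝ => Real.sqrt |h|) (nhds 0) (nhds 0) := by
      have := (Real.continuous_sqrt.comp continuous_abs).tendsto 0
      simpa [Function.comp_def] using this
    filter_upwards [htend.eventually_lt_const (by positivity : (0:ℝ) < (3/2) * c)] with h hh
    rw [sig]
    have h1 : |(-(2/3)) * (h * Real.sqrt |h|)| = (2/3) * |h| * Real.sqrt |h| := by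
      rw [abs_mul, abs_mul, abs_of_nonneg (Real.sqrt_nonneg _),
        show |(-(2/3) : ℝ)| = 2/3 by rw [abs_neg]; exact abs_of_pos (by norm_num)]
      ring
    simp only [Real.norm_eq_abs]
    rw [h1]
    have h2 : Real.sqrt |h| ≥ 0 := Real.sqrt_nonneg _
    nlinarith [abs_nonneg h]
  · have hev : sig =ᶠ[nhds y] fun z => -(2/3) * (z * Real.sqrt z) := by
      filter_upwards [eventually_gt_nhds hy] with z hz
      rw [sig, abs_of_nonneg hz.le]
    have hmul : HasDerivAt (fun z : ℝ => -(2/3) * (z * Real.sqrt z))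
        (-(2/3) * (1 * Real.sqrt y + y * (1 / (2 * Real.sqrt y)))) y :=
      ((hasDerivAt_id y).mul (Real.hasDerivAt_sqrt hy.ne')).const_mul _
    have hs : Real.sqrt y * Real.sqrt y = y := Real.mul_self_sqrt hy.le
    have hsne : Real.sqrt y ≠ 0 := (Real.sqrt_pos.2 hy).ne'
    have hfin := hmul.congr_of_eventuallyEq hev
    refine hfin.congr_deriv (Eq.symm ?_)
    rw [abs_of_nonneg hy.le]
    field_simp
    nlinarith [hs]

lemma sig_deriv : deriv sig = fun y => -Real.sqrt |y| :=
  funext fun y => (sig_hasDerivAt y).deriv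

lemma sig_contDiff_one : ContDiff ℝ 1 sig := by
  rw [contDiff_one_iff_deriv]
  refine ⟨fun y => (sig_hasDerivAt y).differentiableAt, ?_⟩
  rw [sig_deriv]
  exact (Real.continuous_sqrt.comp continuous_abs).neg

def Usol (f g : ℝ → ℝ) (A B : ℝ) (q : ℝ × ℝ) : ℝ :=
  A * PI f (-5/6) 0 (q.1, sig q.2) + B * (q.2 * PI g (-1/6) 0 (q.1, sig q.2))

def Ysol (f g h : ℝ → ℝ) (A B : ℝ) (q : ℝ × ℝ) : ℝ :=
  A * (-Real.sqrt |q.2| * PI f (-5/6) 1 (q.1, sig q.2)) +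
  B * (q.2 * (-Real.sqrt |q.2| * PI g (-1/6) 1 (q.1, sig q.2)) +
    PI h (-1/6) 0 (q.1, sig q.2))

lemma c0_fact1 : (-1 : ℝ) < -5/6 := by norm_num
lemma c0_fact2 : (-5/6 : ℝ) ≤ 0 := by norm_num
lemma c1_fact1 : (-1 : ℝ) < -1/6 := by norm_num
lemma c1_fact2 : (-1/6 : ℝ) ≤ 0 := by norm_num

lemma Fmap_hasFDerivAt (p : ℝ × ℝ) :
    HasFDerivAt (fun q : ℝ × ℝ => (q.1, sig q.2))
      (fstL.prod ((-Real.sqrt |p.2|) • sndL)) p :=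
  hasFDerivAt_fst.prodMk ((sig_hasDerivAt p.2).comp_hasFDerivAt p hasFDerivAt_snd)

lemma Usol_hasFDerivAt {f g : ℝ → ℝ} (hf : ContDiff ℝ 1 f) (hg : ContDiff ℝ 1 g)
    (A B : ℝ) (p : ℝ × ℝ) :
    ∃ L : ℝ × ℝ →L[ℝ] ℝ, HasFDerivAt (Usol f g A B) L p ∧ ∀ v : ℝ × ℝ,
      L v = A * (PI (deriv f) (-5/6) 0 (p.1, sig p.2) * v.1 +
               PI (deriv f) (-5/6) 1 (p.1, sig p.2) * (-Real.sqrt |p.2| * v.2)) +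
            B * (p.2 * (PI (deriv g) (-1/6) 0 (p.1, sig p.2) * v.1 +
               PI (deriv g) (-1/6) 1 (p.1, sig p.2) * (-Real.sqrt |p.2| * v.2)) +
               PI g (-1/6) 0 (p.1, sig p.2) * v.2) := by
  have hF := Fmap_hasFDerivAt p
  have h0 := (PI_hasFDerivAt hf c0_fact1 c0_fact2 0 (p.1, sig p.2)).comp p hF
  have h1 := (PI_hasFDerivAt hg c1_fact1 c1_fact2 0 (p.1, sig p.2)).comp p hF
  have hsnd : HasFDerivAt (fun q : ℝ × ℝ => q.2) sndL p := hasFDerivAt_snd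
  have hmul := hsnd.mul h1
  have htot := (h0.const_mul A).add ((hmul.const_mul B))
  refine ⟨_, htot, ?_⟩
  intro v
  simp only [ContinuousLinearMap.add_apply, ContinuousLinearMap.coe_smul', Pi.smul_apply,
    ContinuousLinearMap.comp_apply, ContinuousLinearMap.prod_apply, fstL_apply, sndL_apply, Function.comp_apply,
    smul_eq_mul]
  try ring

lemma msig_hasFDerivAt {p : ℝ × ℝ} (hp : p.2 < 0) :
    HasFDerivAt (fun q : ℝ × ℝ => -Real.sqrt |q.2|)
      ((1 / (2 * Real.sqrt (-p.2))) • sndL) p := by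
  have hd : HasDerivAt (fun y : ℝ => -Real.sqrt |y|) (1 / (2 * Real.sqrt (-p.2))) p.2 := by
    have hev : (fun y : ℝ => -Real.sqrt |y|) =ᶠ[nhds p.2] fun y => -Real.sqrt (-y) := by
      filter_upwards [eventually_lt_nhds hp] with z hz
      rw [abs_of_nonpos hz.le]
    have h1 : HasDerivAt (fun y : ℝ => -y) (-1) p.2 := (hasDerivAt_id p.2).neg
    have h2 : HasDerivAt (fun y : ℝ => Real.sqrt (-y))
        (1 / (2 * Real.sqrt (-p.2)) * (-1)) p.2 :=
      (Real.hasDerivAt_sqrt (by linarith : -p.2 ≠ 0)).comp p.2 h1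
    have h3 := h2.neg
    have h4 := h3.congr_of_eventuallyEq hev
    refine h4.congr_deriv (Eq.symm ?_)
    ring
  exact hd.comp_hasFDerivAt p hasFDerivAt_snd

lemma Ysol_hasFDerivAt {f g h : ℝ → ℝ} (hf : ContDiff ℝ 1 f) (hg : ContDiff ℝ 1 g)
    (hh : ContDiff ℝ 1 h) (A B : ℝ) {p : ℝ × ℝ} (hp : p.2 < 0) :
    ∃ L : ℝ × ℝ →L[ℝ] ℝ, HasFDerivAt (Ysol f g h A B) L p ∧
      L (0, 1) =
        A * ((1 / (2 * Real.sqrt (-p.2))) * PI f (-5/6) 1 (p.1, sig p.2) +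
          (-Real.sqrt (-p.2)) * ((-Real.sqrt (-p.2)) * PI (deriv f) (-5/6) 2 (p.1, sig p.2))) +
        B * (((-Real.sqrt (-p.2)) * PI g (-1/6) 1 (p.1, sig p.2) +
          p.2 * ((1 / (2 * Real.sqrt (-p.2))) * PI g (-1/6) 1 (p.1, sig p.2) +
            (-Real.sqrt (-p.2)) * ((-Real.sqrt (-p.2)) * PI (deriv g) (-1/6) 2 (p.1, sig p.2)))) +
          (-Real.sqrt (-p.2)) * PI (deriv h) (-1/6) 1 (p.1, sig p.2)) := by
  have hF := Fmap_hasFDerivAt p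
  have habs : |p.2| = -p.2 := abs_of_nonpos hp.le
  have hm := msig_hasFDerivAt hp
  have hR0 := (PI_hasFDerivAt hf c0_fact1 c0_fact2 1 (p.1, sig p.2)).comp p hF
  have hR1 := (PI_hasFDerivAt hg c1_fact1 c1_fact2 1 (p.1, sig p.2)).comp p hF
  have hQ1 := (PI_hasFDerivAt hh c1_fact1 c1_fact2 0 (p.1, sig p.2)).comp p hF
  have hsnd : HasFDerivAt (fun q : ℝ × ℝ => q.2) sndL p := hasFDerivAt_snd
  have hterm1 := (hm.mul hR0).const_mul A
  have hterm2 := ((hsnd.mul (hm.mul hR1)).add hQ1).const_mul B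
  have htot := hterm1.add hterm2
  refine ⟨_, htot, ?_⟩
  simp only [ContinuousLinearMap.add_apply, ContinuousLinearMap.coe_smul', Pi.smul_apply,
    ContinuousLinearMap.comp_apply, ContinuousLinearMap.prod_apply, fstL_apply, sndL_apply, Function.comp_apply,
    smul_eq_mul, habs, Pi.mul_apply]
  try ring

lemma PI_snd_zero (φ : ℝ → ℝ) (c : ℝ) (x : ℝ) :
    PI φ c 0 (x, (0:ℝ)) = φ x * ∫ t in Ioo (-1:ℝ) 1, (1 - t^2) ^ c := by
  rw [PI, ← integral_const_mul]
  apply setIntegral_congr_fun measurableSet_Ioo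
  intro t ht
  simp

lemma sig_pos {y : ℝ} (hy : y < 0) : 0 < sig y := by
  rw [sig]
  have h1 : 0 < Real.sqrt |y| := Real.sqrt_pos.2 (by simp [abs_pos]; linarith)
  nlinarith

def DbarT' (x₁ x₂ δ : ℝ) : Set (ℝ × ℝ) :=
  {p | -δ ≤ p.2 ∧ p.2 ≤ 0 ∧
    x₁ + (2 / 3) * (-p.2) ^ ((3 : ℝ) / 2) ≤ p.1 ∧
    p.1 ≤ x₂ - (2 / 3) * (-p.2) ^ ((3 : ℝ) / 2)}

lemma DbarT'_eq (x₁ x₂ δ : ℝ) : DbarT' x₁ x₂ δ =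
    {p : ℝ × ℝ | -δ ≤ p.2 ∧ p.2 ≤ 0 ∧ x₁ + sig p.2 ≤ p.1 ∧ p.1 ≤ x₂ - sig p.2} := by
  ext p
  simp only [DbarT', mem_setOf_eq]
  constructor
  · rintro ⟨h1, h2, h3, h4⟩
    rw [show (2:ℝ)/3 * (-p.2) ^ ((3:ℝ)/2) = sig p.2 from sig_eq_rpow h2] at h3 h4
    exact ⟨h1, h2, h3, h4⟩
  · rintro ⟨h1, h2, h3, h4⟩
    rw [show (2:ℝ)/3 * (-p.2) ^ ((3:ℝ)/2) = sig p.2 from sig_eq_rpow h2]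
    exact ⟨h1, h2, h3, h4⟩

lemma sig_convexOn : ConvexOn ℝ (Iic (0:ℝ)) sig := by
  apply MonotoneOn.convexOn_of_deriv (convex_Iic 0)
    (sig_contDiff_one.continuous.continuousOn)
    ((sig_contDiff_one.differentiable one_ne_zero).differentiableOn)
  rw [sig_deriv]
  intro a ha b hb hab
  rw [interior_Iic] at ha hb
  simp only [mem_Iio] at ha hb
  show -Real.sqrt |a| ≤ -Real.sqrt |b|
  rw [abs_of_nonpos ha.le, abs_of_nonpos hb.le]
  have := Real.sqrt_le_sqrt (by linarith : -b ≤ -a)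
  linarith

lemma DbarT'_convex (x₁ x₂ δ : ℝ) : Convex ℝ (DbarT' x₁ x₂ δ) := by
  rw [DbarT'_eq]
  intro p hp q hq a b ha hb hab
  simp only [mem_setOf_eq] at hp hq ⊢
  have hsm : (a • p + b • q).1 = a * p.1 + b * q.1 := rfl
  have hsm2 : (a • p + b • q).2 = a * p.2 + b * q.2 := rfl
  rw [hsm, hsm2]
  have hsig : sig (a * p.2 + b * q.2) ≤ a * sig p.2 + b * sig q.2 := by
    have := sig_convexOn.2 (mem_Iic.2 hp.2.1) (mem_Iic.2 hq.2.1) ha hb hab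
    simpa using this
  refine ⟨by nlinarith [hp.1, hq.1], by nlinarith [hp.2.1, hq.2.1], ?_, ?_⟩
  · have h1 := mul_le_mul_of_nonneg_left hp.2.2.1 ha
    have h2 := mul_le_mul_of_nonneg_left hq.2.2.1 hb
    rw [mul_add] at h1 h2
    have h3 : a * x₁ + b * x₁ = x₁ := by rw [← add_mul, hab, one_mul]
    linarith [hsig]
  · have h1 := mul_le_mul_of_nonneg_left hp.2.2.2 ha
    have h2 := mul_le_mul_of_nonneg_left hq.2.2.2 hb
    rw [mul_sub] at h1 h2
    have h3 : a * x₂ + b * x₂ = x₂ := by rw [← add_mul, hab, one_mul]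
    linarith [hsig]

lemma DbarT'_interior_nonempty {x₁ x₂ : ℝ} (hx : x₁ < x₂) {δ : ℝ} (hδ : 0 < δ) :
    (interior (DbarT' x₁ x₂ δ)).Nonempty := by
  set η : ℝ := min (δ/2) (min 1 ((x₂ - x₁)/4)) with hη
  have hη0 : 0 < η := by
    apply lt_min (by linarith)
    apply lt_min one_pos (by linarith)
  have hη1 : η ≤ 1 := le_trans (min_le_right _ _) (min_le_left _ _)
  have hηδ : η ≤ δ/2 := min_le_left _ _
  have hηx : η ≤ (x₂ - x₁)/4 := le_trans (min_le_right _ _) (min_le_right _ _)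
  have hsigle : sig (-η) ≤ η := by
    rw [sig, abs_neg, abs_of_pos hη0]
    have hs1 : Real.sqrt η ≤ 1 := by
      rw [show (1:ℝ) = Real.sqrt 1 by simp]
      exact Real.sqrt_le_sqrt hη1
    have hs0 : 0 ≤ Real.sqrt η := Real.sqrt_nonneg _
    nlinarith
  set O : Set (ℝ × ℝ) := {p | -δ < p.2 ∧ p.2 < 0 ∧ x₁ + sig p.2 < p.1 ∧ p.1 < x₂ - sig p.2}
    with hO
  have hOopen : IsOpen O := by
    have hc : Continuous sig := sig_contDiff_one.continuous
    have h1 : IsOpen {p : ℝ × ℝ | -δ < p.2} := isOpen_lt continuous_const continuous_snd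
    have h2 : IsOpen {p : ℝ × ℝ | p.2 < 0} := isOpen_lt continuous_snd continuous_const
    have h3 : IsOpen {p : ℝ × ℝ | x₁ + sig p.2 < p.1} :=
      isOpen_lt (continuous_const.add (hc.comp continuous_snd)) continuous_fst
    have h4 : IsOpen {p : ℝ × ℝ | p.1 < x₂ - sig p.2} :=
      isOpen_lt continuous_fst (continuous_const.sub (hc.comp continuous_snd))
    have : O = ({p : ℝ × ℝ | -δ < p.2} ∩ {p : ℝ × ℝ | p.2 < 0}) ∩
        ({p : ℝ × ℝ | x₁ + sig p.2 < p.1} ∩ {p : ℝ × ℝ | p.1 < x₂ - sig p.2}) := by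
      ext p
      simp only [hO, mem_setOf_eq, mem_inter_iff, and_assoc]
    rw [this]
    exact (h1.inter h2).inter (h3.inter h4)
  have hsub : O ⊆ DbarT' x₁ x₂ δ := by
    rw [DbarT'_eq]
    rintro p ⟨h1, h2, h3, h4⟩
    exact ⟨h1.le, h2.le, h3.le, h4.le⟩
  have hpt : ((x₁ + x₂)/2, -η) ∈ O := by
    refine ⟨by simp only; linarith, by simp only; linarith, ?_, ?_⟩
    · simp only
      linarith
    · simp only
      linarith
  exact ⟨_, interior_maximal hsub hOopen hpt⟩


lemma Usol_contDiff_one {f g : ℝ → ℝ} (hf : ContDiff ℝ 2 f) (hg : ContDiff ℝ 2 g) (A B : ℝ) :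
    ContDiff ℝ 1 (Usol f g A B) := by
  have hFmap : ContDiff ℝ 1 (fun q : ℝ × ℝ => (q.1, sig q.2)) :=
    contDiff_fst.prodMk (sig_contDiff_one.comp contDiff_snd)
  have h0 := (PI_contDiff_one hf c0_fact1 c0_fact2 0).comp hFmap
  have h1 := (PI_contDiff_one hg c1_fact1 c1_fact2 0).comp hFmap
  exact (contDiff_const.mul h0).add (contDiff_const.mul (contDiff_snd.mul h1))

lemma sig_contDiffAt_neg {y : ℝ} (hy : y < 0) : ContDiffAt ℝ 2 sig y := by
  have hev : sig =ᶠ[nhds y] fun z => -(2/3) * (z * Real.sqrt (-z)) := by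
    filter_upwards [eventually_lt_nhds hy] with z hz
    rw [sig, abs_of_nonpos hz.le]
  have hC : ContDiffAt ℝ 2 (fun z : ℝ => -(2/3) * (z * Real.sqrt (-z))) y := by
    apply ContDiffAt.mul contDiffAt_const
    apply ContDiffAt.mul contDiffAt_id
    exact (Real.contDiffAt_sqrt (by linarith : -y ≠ 0)).comp y contDiffAt_id.neg
  exact hC.congr_of_eventuallyEq hev

lemma Usol_contDiffOn_two {f g : ℝ → ℝ} (hf : ContDiff ℝ 3 f) (hg : ContDiff ℝ 3 g) (A B : ℝ) :
    ContDiffOn ℝ 2 (Usol f g A B) {p : ℝ × ℝ | p.2 < 0} := by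
  intro p hp
  simp only [mem_setOf_eq] at hp
  have hFmap : ContDiffAt ℝ 2 (fun q : ℝ × ℝ => (q.1, sig q.2)) p :=
    contDiffAt_fst.prodMk ((sig_contDiffAt_neg hp).comp p contDiffAt_snd)
  have h0 := ((PI_contDiff_two hf c0_fact1 c0_fact2 0).contDiffAt).comp p hFmap
  have h1 := ((PI_contDiff_two hg c1_fact1 c1_fact2 0).contDiffAt).comp p hFmap
  exact ((contDiffAt_const.mul h0).add
    (contDiffAt_const.mul (contDiffAt_snd.mul h1))).contDiffWithinAt

lemma pde_arith {s q c2 A B S₀ T₀ R₀ S₁ T₁ R₁ : ℝ} (hq : 0 < q) (h2q : 2 * q * c2 = 1)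
    (hs : s = (2/3) * q^3)
    (e₀ : s * (T₀ - S₀) + 2 * (-5/6 + 1) * R₀ = 0)
    (e₁ : s * (T₁ - S₁) + 2 * (-1/6 + 1) * R₁ = 0) :
    (-q^2) * (A * S₀ + B * ((-q^2) * S₁)) +
    (A * (c2 * R₀ + (-q) * ((-q) * T₀)) +
     B * (((-q) * R₁ + (-q^2) * (c2 * R₁ + (-q) * ((-q) * T₁))) + (-q) * R₁)) = 0 := by
  subst hs
  have hqne : (2 * q) ≠ 0 := by positivity
  have h : (2 * q) * ((-q^2) * (A * S₀ + B * ((-q^2) * S₁)) +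
      (A * (c2 * R₀ + (-q) * ((-q) * T₀)) +
       B * (((-q) * R₁ + (-q^2) * (c2 * R₁ + (-q) * ((-q) * T₁))) + (-q) * R₁))) = 0 := by
    linear_combination 3 * A * e₀ - 3 * B * q^2 * e₁ + (A * R₀ - B * q^2 * R₁) * h2q
  rcases mul_eq_zero.mp h with h' | h'
  · exact absurd h' hqne
  · exact h' 

theorem tricomi_degenerate_problem'
    (x₁ x₂ : ℝ) (hx : x₁ < x₂)
    (u₀ u₁ : ℝ → ℝ)
    (hu₀ : ContDiffOn ℝ 4 u₀ (Icc x₁ x₂)) (hu₁ : ContDiffOn ℝ 3 u₁ (Icc x₁ x₂)) :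
    ∃ δ : ℝ, 0 < δ ∧ δ ≤ (9 * (x₂ - x₁) ^ 2 / 16) ^ ((1 : ℝ) / 3) ∧
      ∃ u : ℝ × ℝ → ℝ,
        ContDiffOn ℝ 1 u (DbarT' x₁ x₂ δ) ∧
        ContDiffOn ℝ 2 u (DbarT' x₁ x₂ δ ∩ {p | p.2 < 0}) ∧
        (∀ p ∈ DbarT' x₁ x₂ δ, p.2 < 0 →
          p.2 * fderivWithin ℝ (fun q => fderivWithin ℝ u (DbarT' x₁ x₂ δ) q (1, 0))
              (DbarT' x₁ x₂ δ) p (1, 0)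
            + fderivWithin ℝ (fun q => fderivWithin ℝ u (DbarT' x₁ x₂ δ) q (0, 1))
              (DbarT' x₁ x₂ δ) p (0, 1) = 0) ∧
        (∀ x ∈ Icc x₁ x₂, u (x, 0) = u₀ x ∧
          fderivWithin ℝ u (DbarT' x₁ x₂ δ) (x, 0) (0, 1) = u₁ x) := by
  have hbase : 0 < 9 * (x₂ - x₁)^2 / 16 := by nlinarith
  set δ : ℝ := (9 * (x₂ - x₁)^2 / 16) ^ ((1:ℝ)/3) with hδdef
  have hδpos : 0 < δ := Real.rpow_pos_of_pos hbase _
  refine ⟨δ, hδpos, le_refl _, ?_⟩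
  obtain ⟨φ₀, hφ₀, hφ₀eq⟩ := extend_Icc 4 hx (by exact_mod_cast hu₀)
  obtain ⟨φ₁, hφ₁, hφ₁eq⟩ := extend_Icc 3 hx (by exact_mod_cast hu₁)
  have hφ₀3 : ContDiff ℝ 3 φ₀ := hφ₀.of_le (by exact_mod_cast (by norm_num : (3:ℕ) ≤ 4))
  have hφ₀2 : ContDiff ℝ 2 φ₀ := hφ₀3.of_le (by exact_mod_cast (by norm_num : (2:ℕ) ≤ 3))
  have hφ₀1 : ContDiff ℝ 1 φ₀ := hφ₀2.of_le (by exact_mod_cast (by norm_num : (1:ℕ) ≤ 2))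
  have hφ₁3 : ContDiff ℝ 3 φ₁ := hφ₁.of_le (le_refl _)
  have hφ₁2 : ContDiff ℝ 2 φ₁ := hφ₁3.of_le (by exact_mod_cast (by norm_num : (2:ℕ) ≤ 3))
  have hφ₁1 : ContDiff ℝ 1 φ₁ := hφ₁2.of_le (by exact_mod_cast (by norm_num : (1:ℕ) ≤ 2))
  have hφ₀' : ContDiff ℝ 2 (deriv φ₀) := by
    have := (contDiff_succ_iff_deriv (n := 2)).1 (by exact_mod_cast hφ₀3)
    exact this.2.2
  have hφ₀'1 : ContDiff ℝ 1 (deriv φ₀) := hφ₀'.of_le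
    (by exact_mod_cast (by norm_num : (1:ℕ) ≤ 2))
  have hφ₁' : ContDiff ℝ 2 (deriv φ₁) := by
    have := (contDiff_succ_iff_deriv (n := 2)).1 (by exact_mod_cast hφ₁3)
    exact this.2.2
  have hφ₁'1 : ContDiff ℝ 1 (deriv φ₁) := hφ₁'.of_le
    (by exact_mod_cast (by norm_num : (1:ℕ) ≤ 2))
  set I₀ : ℝ := ∫ t in Ioo (-1:ℝ) 1, (1 - t^2) ^ (-5/6 : ℝ) with hI₀def
  set I₁ : ℝ := ∫ t in Ioo (-1:ℝ) 1, (1 - t^2) ^ (-1/6 : ℝ) with hI₁def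
  have hI₀pos : 0 < I₀ := pos_intw c0_fact1 c0_fact2
  have hI₁pos : 0 < I₁ := pos_intw c1_fact1 c1_fact2
  set A : ℝ := I₀⁻¹ with hAdef
  set B : ℝ := I₁⁻¹ with hBdef
  set D : Set (ℝ × ℝ) := DbarT' x₁ x₂ δ with hDdef
  set u : ℝ × ℝ → ℝ := Usol φ₀ φ₁ A B with hudef
  have hDeq : D = {p : ℝ × ℝ | -δ ≤ p.2 ∧ p.2 ≤ 0 ∧ x₁ + sig p.2 ≤ p.1 ∧
      p.1 ≤ x₂ - sig p.2} := DbarT'_eq x₁ x₂ δ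
  have hud : UniqueDiffOn ℝ D :=
    uniqueDiffOn_convex (DbarT'_convex x₁ x₂ δ) (DbarT'_interior_nonempty hx hδpos)
  have hsig0 : sig 0 = 0 := by simp [sig]
  refine ⟨u, ?_, ?_, ?_, ?_⟩
  · exact (Usol_contDiff_one hφ₀2 hφ₁2 A B).contDiffOn
  · exact (Usol_contDiffOn_two hφ₀3 hφ₁3 A B).mono inter_subset_right
  · -- the PDE
    intro p hp hp2
    have hEqX : EqOn (fun z => fderivWithin ℝ u D z (1, 0))
        (Usol (deriv φ₀) (deriv φ₁) A B) D := by
      intro z hz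
      obtain ⟨L, hL, hLv⟩ := Usol_hasFDerivAt hφ₀1 hφ₁1 A B z
      simp only
      rw [hL.differentiableAt.fderivWithin (hud z hz), hL.fderiv, hLv (1, 0)]
      simp only [Usol]
      ring
    have hEqY : EqOn (fun z => fderivWithin ℝ u D z (0, 1))
        (Ysol (deriv φ₀) (deriv φ₁) φ₁ A B) D := by
      intro z hz
      obtain ⟨L, hL, hLv⟩ := Usol_hasFDerivAt hφ₀1 hφ₁1 A B z
      simp only
      rw [hL.differentiableAt.fderivWithin (hud z hz), hL.fderiv, hLv (0, 1)]
      simp only [Ysol]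
      ring
    have h1 : fderivWithin ℝ (fun q => fderivWithin ℝ u D q (1, 0)) D p =
        fderivWithin ℝ (Usol (deriv φ₀) (deriv φ₁) A B) D p :=
      fderivWithin_congr hEqX (hEqX hp)
    have h2 : fderivWithin ℝ (fun q => fderivWithin ℝ u D q (0, 1)) D p =
        fderivWithin ℝ (Ysol (deriv φ₀) (deriv φ₁) φ₁ A B) D p :=
      fderivWithin_congr hEqY (hEqY hp)
    rw [h1, h2]
    obtain ⟨LX, hLX, hLXv⟩ := Usol_hasFDerivAt hφ₀'1 hφ₁'1 A B p
    obtain ⟨LY, hLY, hLYv⟩ := Ysol_hasFDerivAt hφ₀'1 hφ₁'1 hφ₁1 A B hp2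
    rw [hLX.differentiableAt.fderivWithin (hud p hp), hLX.fderiv,
      hLY.differentiableAt.fderivWithin (hud p hp), hLY.fderiv, hLXv (1, 0), hLYv]
    -- arithmetic
    have hq : 0 < Real.sqrt (-p.2) := Real.sqrt_pos.2 (by linarith)
    have hq2 : Real.sqrt (-p.2) ^ 2 = -p.2 := Real.sq_sqrt (by linarith)
    have habs : |p.2| = -p.2 := abs_of_nonpos hp2.le
    have hsig_val : sig p.2 = (2/3) * Real.sqrt (-p.2) ^ 3 := by
      rw [sig, habs]
      linear_combination (-(2/3) * Real.sqrt (-p.2)) * hq2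
    have hsne : sig p.2 ≠ 0 := (sig_pos hp2).ne'
    have e₀ := EPD hφ₀2 c0_fact1 (by norm_num : (-5/6:ℝ) < 0) (p.1, sig p.2) hsne
    have e₁ := EPD hφ₁2 c1_fact1 (by norm_num : (-1/6:ℝ) < 0) (p.1, sig p.2) hsne
    simp only at e₀ e₁
    have h2q : 2 * Real.sqrt (-p.2) * (1/(2*Real.sqrt (-p.2))) = 1 := by
      field_simp
    have harith := pde_arith (A := A) (B := B) hq h2q hsig_val e₀ e₁
    simp only [habs]
    linear_combination harith + (A * PI (deriv (deriv φ₀)) (-5/6) 0 (p.1, sig p.2) +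
      B * (p.2 - Real.sqrt (-p.2)^2) * PI (deriv (deriv φ₁)) (-1/6) 0 (p.1, sig p.2) +
      B * ((1/(2*Real.sqrt (-p.2))) * PI (deriv φ₁) (-1/6) 1 (p.1, sig p.2) +
        Real.sqrt (-p.2)^2 * PI (deriv (deriv φ₁)) (-1/6) 2 (p.1, sig p.2))) * hq2
  · -- boundary conditions
    intro x hxm
    have hmem : ((x : ℝ), (0 : ℝ)) ∈ D := by
      rw [hDeq]
      refine ⟨by simp; linarith, le_rfl, ?_, ?_⟩
      · simp [hsig0]; exact hxm.1
      · simp [hsig0]; exact hxm.2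
    constructor
    · show Usol φ₀ φ₁ A B (x, 0) = u₀ x
      rw [Usol]
      simp only [hsig0, PI_snd_zero]
      rw [← hI₀def]
      rw [hφ₀eq hxm]
      simp only [zero_mul, mul_zero, add_zero, hAdef]
      field_simp [hI₀pos.ne']
    · obtain ⟨L, hL, hLv⟩ := Usol_hasFDerivAt hφ₀1 hφ₁1 A B (x, 0)
      rw [hL.differentiableAt.fderivWithin (hud _ hmem), hL.fderiv, hLv (0, 1)]
      simp only [hsig0, abs_zero, Real.sqrt_zero, neg_zero, zero_mul, mul_zero, mul_one,
        zero_add, add_zero, mul_comm]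
      rw [PI_snd_zero, ← hI₁def, hφ₁eq hxm]
      rw [hBdef]
      field_simp [hI₁pos.ne']

end

end TricomiAux

/-- local classical solvability of the degenerate boundary problem for
the Tricomi equation `y u_xx + u_yy = 0`, with `u` and `u_y` prescribed on the
degenerate line `y = 0`. -/
theorem tricomi_degenerate_problem
    (x₁ x₂ : ℝ) (hx : x₁ < x₂)
    (u₀ u₁ : ℝ → ℝ)
    (hu₀ : ContDiffOn ℝ 4 u₀ (Icc x₁ x₂)) (hu₁ : ContDiffOn ℝ 3 u₁ (Icc x₁ x₂)) :
    ∃ δ : ℝ, 0 < δ ∧ δ ≤ (9 * (x₂ - x₁) ^ 2 / 16) ^ ((1 : ℝ) / 3) ∧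
      ∃ u : ℝ × ℝ → ℝ,
        ContDiffOn ℝ 1 u (DbarT x₁ x₂ δ) ∧
        ContDiffOn ℝ 2 u (DbarT x₁ x₂ δ ∩ {p | p.2 < 0}) ∧
        (∀ p ∈ DbarT x₁ x₂ δ, p.2 < 0 →
          p.2 * fderivWithin ℝ (fun q => fderivWithin ℝ u (DbarT x₁ x₂ δ) q (1, 0))
              (DbarT x₁ x₂ δ) p (1, 0)
            + fderivWithin ℝ (fun q => fderivWithin ℝ u (DbarT x₁ x₂ δ) q (0, 1))
              (DbarT x₁ x₂ δ) p (0, 1) = 0) ∧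
        (∀ x ∈ Icc x₁ x₂, u (x, 0) = u₀ x ∧
          fderivWithin ℝ u (DbarT x₁ x₂ δ) (x, 0) (0, 1) = u₁ x) := by
  have h : DbarT x₁ x₂ = DbarT' x₁ x₂ := rfl
  rw [h]
  exact tricomi_degenerate_problem' x₁ x₂ hx u₀ u₁ hu₀ hu₁
end

section
/- Let γ > 1 and κ = (γ−1)/2. Let ρ, u, v, p be C¹ functions on an open set Ω ⊆ ℝ² with ρ>0, p>0 and u²+v² > c², where c = √(γp/ρ). Let θ, ω : Ω → ℝ be C¹ with 0 < ω < π/2, u = c·cos(θ)/sin(ω), v = c·sin(θ)/sin(ω), and assume cos(θ+ω) ≠ 0 and cos(θ−ω) ≠ 0 on Ω. Set Λ₊ = (uv + c·√(u²+v²−c²))/(u²−c²), S = p·ρ^{−γ}, B = (u²+v²)/2 + c²/(γ−1), α = θ+ω, and suppose that the characteristic equation −cρv·u_x + cρu·v_x + √(u²+v²−c²)·p_x + Λ₊·(−cρv·u_y + cρu·v_y + √(u²+v²−c²)·p_y) = 0 holds on Ω. Then on Ω: ∂⁺θ + (cos²ω/(sin²ω+κ))·∂⁺ω = (sin(2ω)/(4κ))·((1/γ)·∂⁺(ln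 S) − ∂⁺(ln B)), where ∂⁺f = cos(α)·f_x + sin(α)·f_y. -/
open Real Set

/-- The local sound speed `c = √(γ p / ρ)`. -/
noncomputable def cspd (γ : ℝ) (ρ p : ℝ × ℝ → ℝ) (q : ℝ × ℝ) : ℝ :=
  Real.sqrt (γ * p q / ρ q)

lemma apply_dir (L : ℝ × ℝ →L[ℝ] ℝ) (x : ℝ) :
    L (Real.cos x, Real.sin x) = Real.cos x * L (1, 0) + Real.sin x * L (0, 1) := by
  have h : ((Real.cos x, Real.sin x) : ℝ × ℝ)
      = Real.cos x • ((1:ℝ), (0:ℝ)) + Real.sin x • ((0:ℝ), (1:ℝ)) := by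
    simp [Prod.ext_iff]
  rw [h, map_add, map_smul, map_smul, smul_eq_mul, smul_eq_mul]

lemma key_algebra (g sθ cθ sω cω ρ0 p0 c0 u0 v0 Aθ Aω Ap Aρ Ac Au Av : ℝ)
    (hg : 1 < g) (hρ0 : 0 < ρ0) (hp0 : 0 < p0) (hsω : 0 < sω) (hcω : 0 < cω) (hc0 : 0 < c0)
    (hc2 : ρ0 * c0 ^ 2 = g * p0)
    (hpyθ : sθ ^ 2 + cθ ^ 2 = 1)
    (hu0 : u0 = c0 * cθ / sω) (hv0 : v0 = c0 * sθ / sω)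
    (hAu : sω ^ 2 * Au = sω * cθ * Ac - c0 * sθ * sω * Aθ - c0 * cθ * cω * Aω)
    (hAv : sω ^ 2 * Av = sω * sθ * Ac + c0 * cθ * sω * Aθ - c0 * sθ * cω * Aω)
    (hAc : 2 * c0 * ρ0 * Ac = g * Ap - c0 ^ 2 * Aρ)
    (hC : -(c0 * ρ0 * v0) * Au + c0 * ρ0 * u0 * Av + c0 * cω / sω * Ap = 0) :
    Aθ + cω ^ 2 / (sω ^ 2 + (g - 1) / 2) * Aω
      = 2 * sω * cω / (4 * ((g - 1) / 2)) *
        (1 / g * (Ap / p0 - g * Aρ / ρ0)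
          - (u0 * Au + v0 * Av + 2 * c0 * Ac / (g - 1)) / ((u0 ^ 2 + v0 ^ 2) / 2 + c0 ^ 2 / (g - 1))) := by
  have hsne : sω ≠ 0 := hsω.ne'
  have hcne : cω ≠ 0 := hcω.ne'
  have hc0ne : c0 ≠ 0 := hc0.ne'
  have hρne : ρ0 ≠ 0 := hρ0.ne'
  have hgne : g ≠ 0 := by linarith
  have hg1 : g - 1 ≠ 0 := by linarith
  have h_uv : sω ^ 2 * (cθ * Av - sθ * Au) = c0 * sω * Aθ := by
    linear_combination cθ * hAv - sθ * hAu + c0 * sω * Aθ * hpyθ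
  have huv2 : sω ^ 2 * (cθ * Au + sθ * Av) = sω * Ac - c0 * cω * Aω := by
    linear_combination cθ * hAu + sθ * hAv + (sω * Ac - c0 * cω * Aω) * hpyθ
  have huv2' : cθ * Au + sθ * Av = (sω * Ac - c0 * cω * Aω) / sω ^ 2 := by
    rw [eq_div_iff (pow_ne_zero 2 hsne)]; linear_combination huv2
  rw [hu0, hv0] at hC
  field_simp at hC
  have hAp'' : c0 * sω ^ 2 * (Ap * (sω * cω)) = c0 * sω ^ 2 * (-(c0 ^ 2 * ρ0 * Aθ)) := by
    linear_combination sω ^ 3 * hC - c0 ^ 2 * ρ0 * sω * h_uv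
  have hAp' : Ap = -(c0 ^ 2 * ρ0 * Aθ) / (sω * cω) := by
    rw [eq_div_iff (mul_ne_zero hsne hcne)]
    exact mul_left_cancel₀ (by positivity) hAp''
  have hUVa : u0 * Au + v0 * Av = c0 * (cθ * Au + sθ * Av) / sω := by
    rw [hu0, hv0]; ring
  have hB0 : u0 ^ 2 + v0 ^ 2 = c0 ^ 2 / sω ^ 2 := by
    rw [hu0, hv0]
    rw [div_pow, div_pow, ← add_div]
    rw [mul_pow, mul_pow, ← mul_add, show cθ ^ 2 + sθ ^ 2 = (1:ℝ) by linarith, mul_one]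
  rw [hUVa, huv2', hB0]
  have hAc' : Ac = (g * Ap - c0 ^ 2 * Aρ) / (2 * c0 * ρ0) := by
    rw [eq_div_iff (by positivity)]; linear_combination hAc
  subst hAc'
  subst hAp'
  have hp0' : p0 = ρ0 * c0 ^ 2 / g := by
    rw [eq_div_iff hgne]; linear_combination -hc2
  subst hp0'
  have hA : 2 * sω ^ 2 + (g - 1) ≠ 0 := by
    have h1 := pow_pos hsω 2
    have : (0:ℝ) < 2 * sω ^ 2 + (g - 1) := by linarith
    exact this.ne'
  rw [show sω ^ 2 + (g - 1) / 2 = (2 * sω ^ 2 + (g - 1)) / 2 by ring]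
  rw [show c0 ^ 2 / sω ^ 2 / 2 + c0 ^ 2 / (g - 1)
        = c0 ^ 2 * (2 * sω ^ 2 + (g - 1)) / (2 * sω ^ 2 * (g - 1)) by
      field_simp; ring]
  field_simp [hA]
  ring


set_option maxHeartbeats 1600000 in
/-- the plus characteristic equation of the steady full Euler system,
written in terms of the flow angle `θ`, the Mach angle `ω`, the entropy `S = p ρ^{−γ}`
and the Bernoulli function `B`. -/
theorem euler_plus_characteristic_form
    (γ : ℝ) (hγ : 1 < γ)
    (Ω : Set (ℝ × ℝ)) (hΩ : IsOpen Ω)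
    (ρ u v p θ ω : ℝ × ℝ → ℝ)
    (hρ : ContDiffOn ℝ 1 ρ Ω) (hu : ContDiffOn ℝ 1 u Ω)
    (hv : ContDiffOn ℝ 1 v Ω) (hp : ContDiffOn ℝ 1 p Ω)
    (hθ : ContDiffOn ℝ 1 θ Ω) (hω : ContDiffOn ℝ 1 ω Ω)
    (hρpos : ∀ q ∈ Ω, 0 < ρ q) (hppos : ∀ q ∈ Ω, 0 < p q)
    (hsup : ∀ q ∈ Ω, (cspd γ ρ p q) ^ 2 < (u q) ^ 2 + (v q) ^ 2)
    (hωrange : ∀ q ∈ Ω, 0 < ω q ∧ ω q < π / 2)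
    (hudef : ∀ q ∈ Ω, u q = cspd γ ρ p q * Real.cos (θ q) / Real.sin (ω q))
    (hvdef : ∀ q ∈ Ω, v q = cspd γ ρ p q * Real.sin (θ q) / Real.sin (ω q))
    (hcos1 : ∀ q ∈ Ω, Real.cos (θ q + ω q) ≠ 0)
    (hcos2 : ∀ q ∈ Ω, Real.cos (θ q - ω q) ≠ 0)
    (hchar : ∀ q ∈ Ω,
      (-(cspd γ ρ p q * ρ q * v q) * px u q + cspd γ ρ p q * ρ q * u q * px v q
          + Real.sqrt ((u q) ^ 2 + (v q) ^ 2 - (cspd γ ρ p q) ^ 2) * px p q)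
        + ((u q * v q + cspd γ ρ p q * Real.sqrt ((u q) ^ 2 + (v q) ^ 2 - (cspd γ ρ p q) ^ 2))
              / ((u q) ^ 2 - (cspd γ ρ p q) ^ 2)) *
          (-(cspd γ ρ p q * ρ q * v q) * py u q + cspd γ ρ p q * ρ q * u q * py v q
            + Real.sqrt ((u q) ^ 2 + (v q) ^ 2 - (cspd γ ρ p q) ^ 2) * py p q) = 0) :
    ∀ q ∈ Ω,
      dDir (fun z => θ z + ω z) θ q
          + (Real.cos (ω q) ^ 2 / (Real.sin (ω q) ^ 2 + (γ - 1) / 2)) *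
            dDir (fun z => θ z + ω z) ω q
        = (Real.sin (2 * ω q) / (4 * ((γ - 1) / 2))) *
            ((1 / γ) * dDir (fun z => θ z + ω z)
                (fun z => Real.log (p z * (ρ z) ^ (-γ))) q
              - dDir (fun z => θ z + ω z)
                (fun z => Real.log (((u z) ^ 2 + (v z) ^ 2) / 2
                  + (cspd γ ρ p z) ^ 2 / (γ - 1))) q) := by
  intro q hq
  have hqn : Ω ∈ nhds q := hΩ.mem_nhds hq
  -- basic positivity
  have hρ0 : 0 < ρ q := hρpos q hq
  have hp0 : 0 < p q := hppos q hq
  have hγ0 : (0:ℝ) < γ := by linarith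
  have hrad_pos : 0 < γ * p q / ρ q := div_pos (mul_pos hγ0 hp0) hρ0
  have hc0pos : 0 < cspd γ ρ p q := Real.sqrt_pos.mpr hrad_pos
  have hc0ne : cspd γ ρ p q ≠ 0 := hc0pos.ne'
  have hcsq : (cspd γ ρ p q) ^ 2 = γ * p q / ρ q := Real.sq_sqrt hrad_pos.le
  have hsω : 0 < Real.sin (ω q) :=
    Real.sin_pos_of_pos_of_lt_pi (hωrange q hq).1
      (lt_trans (hωrange q hq).2 (by linarith [Real.pi_pos]))
  have hcω : 0 < Real.cos (ω q) :=
    Real.cos_pos_of_mem_Ioo ⟨by linarith [(hωrange q hq).1, Real.pi_pos], (hωrange q hq).2⟩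
  have hsne : Real.sin (ω q) ≠ 0 := hsω.ne'
  have hcne : Real.cos (ω q) ≠ 0 := hcω.ne'
  have hcα : Real.cos (θ q + ω q) ≠ 0 := hcos1 q hq
  have hcβ : Real.cos (θ q - ω q) ≠ 0 := hcos2 q hq
  have hpyθ : Real.sin (θ q) ^ 2 + Real.cos (θ q) ^ 2 = 1 := Real.sin_sq_add_cos_sq _
  have hpyω : Real.sin (ω q) ^ 2 + Real.cos (ω q) ^ 2 = 1 := Real.sin_sq_add_cos_sq _
  -- multiplied value facts
  have hu0m : u q * Real.sin (ω q) = cspd γ ρ p q * Real.cos (θ q) := by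
    rw [hudef q hq]; field_simp
  have hv0m : v q * Real.sin (ω q) = cspd γ ρ p q * Real.sin (θ q) := by
    rw [hvdef q hq]; field_simp
  have hc2m : ρ q * (cspd γ ρ p q) ^ 2 = γ * p q := by
    rw [hcsq]; field_simp
  -- the square root
  have hrad2 : ((u q) ^ 2 + (v q) ^ 2 - (cspd γ ρ p q) ^ 2) * Real.sin (ω q) ^ 2
      = (cspd γ ρ p q * Real.cos (ω q)) ^ 2 := by
    linear_combination (u q * Real.sin (ω q) + cspd γ ρ p q * Real.cos (θ q)) * hu0m
      + (v q * Real.sin (ω q) + cspd γ ρ p q * Real.sin (θ q)) * hv0m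
      + (cspd γ ρ p q) ^ 2 * hpyθ - (cspd γ ρ p q) ^ 2 * hpyω
  have harg : (u q) ^ 2 + (v q) ^ 2 - (cspd γ ρ p q) ^ 2
      = (cspd γ ρ p q * Real.cos (ω q) / Real.sin (ω q)) ^ 2 := by
    rw [div_pow, eq_div_iff (pow_ne_zero 2 hsne)]
    linear_combination hrad2
  have hRval : Real.sqrt ((u q) ^ 2 + (v q) ^ 2 - (cspd γ ρ p q) ^ 2)
      = cspd γ ρ p q * Real.cos (ω q) / Real.sin (ω q) := by
    rw [harg]
    exact Real.sqrt_sq (le_of_lt (div_pos (mul_pos hc0pos hcω) hsω))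
  -- Lambda = tan(θ+ω)
  have hDnm : ((u q) ^ 2 - (cspd γ ρ p q) ^ 2) * Real.sin (ω q) ^ 2
      = (cspd γ ρ p q) ^ 2 * (Real.cos (θ q + ω q) * Real.cos (θ q - ω q)) := by
    rw [Real.cos_add, Real.cos_sub]
    linear_combination (u q * Real.sin (ω q) + cspd γ ρ p q * Real.cos (θ q)) * hu0m
      + (cspd γ ρ p q) ^ 2 * Real.sin (ω q) ^ 2 * hpyθ
      - (cspd γ ρ p q) ^ 2 * Real.cos (θ q) ^ 2 * hpyω
  have hDne : (u q) ^ 2 - (cspd γ ρ p q) ^ 2 ≠ 0 := by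
    have h1 : ((u q) ^ 2 - (cspd γ ρ p q) ^ 2) * Real.sin (ω q) ^ 2 ≠ 0 := by
      rw [hDnm]
      exact mul_ne_zero (pow_ne_zero 2 hc0ne) (mul_ne_zero hcα hcβ)
    exact fun h => h1 (by rw [h, zero_mul])
  have hRm : Real.sqrt ((u q) ^ 2 + (v q) ^ 2 - (cspd γ ρ p q) ^ 2) * Real.sin (ω q)
      = cspd γ ρ p q * Real.cos (ω q) := by
    rw [hRval]; field_simp
  have hΛ : (u q * v q + cspd γ ρ p q
        * Real.sqrt ((u q) ^ 2 + (v q) ^ 2 - (cspd γ ρ p q) ^ 2))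
        / ((u q) ^ 2 - (cspd γ ρ p q) ^ 2)
      = Real.sin (θ q + ω q) / Real.cos (θ q + ω q) := by
    rw [div_eq_div_iff hDne hcα]
    apply mul_left_cancel₀ (pow_ne_zero 2 hsne)
    rw [Real.cos_add, Real.sin_add]
    linear_combination
      (Real.cos (θ q) * Real.cos (ω q) - Real.sin (θ q) * Real.sin (ω q)) *
          ((v q * Real.sin (ω q)) * hu0m + cspd γ ρ p q * Real.cos (θ q) * hv0m
            + cspd γ ρ p q * Real.sin (ω q) * hRm)
        - (Real.sin (θ q) * Real.cos (ω q) + Real.cos (θ q) * Real.sin (ω q)) *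
            (u q * Real.sin (ω q) + cspd γ ρ p q * Real.cos (θ q)) * hu0m
        + (cspd γ ρ p q) ^ 2 * Real.cos (θ q) * Real.sin (ω q) * hpyω
        - (cspd γ ρ p q) ^ 2 * Real.cos (θ q) * Real.sin (ω q) * hpyθ
  -- the characteristic equation along direction (cos α, sin α)
  have hch := hchar q hq
  rw [hΛ] at hch
  have hCE : Real.cos (θ q + ω q) *
        (-(cspd γ ρ p q * ρ q * v q) * px u q + cspd γ ρ p q * ρ q * u q * px v q
          + Real.sqrt ((u q) ^ 2 + (v q) ^ 2 - (cspd γ ρ p q) ^ 2) * px p q)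
      + Real.sin (θ q + ω q) *
        (-(cspd γ ρ p q * ρ q * v q) * py u q + cspd γ ρ p q * ρ q * u q * py v q
          + Real.sqrt ((u q) ^ 2 + (v q) ^ 2 - (cspd γ ρ p q) ^ 2) * py p q) = 0 := by
    field_simp at hch
    linear_combination hch
  -- differentiability of the basic functions
  have hρd : DifferentiableAt ℝ ρ q := (hρ.contDiffAt hqn).differentiableAt one_ne_zero
  have hpd : DifferentiableAt ℝ p q := (hp.contDiffAt hqn).differentiableAt one_ne_zero
  have hθd : DifferentiableAt ℝ θ q := (hθ.contDiffAt hqn).differentiableAt one_ne_zero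
  have hωd : DifferentiableAt ℝ ω q := (hω.contDiffAt hqn).differentiableAt one_ne_zero
  have hud : DifferentiableAt ℝ u q := (hu.contDiffAt hqn).differentiableAt one_ne_zero
  have hvd : DifferentiableAt ℝ v q := (hv.contDiffAt hqn).differentiableAt one_ne_zero
  have Hρfd : HasFDerivAt ρ (fderiv ℝ ρ q) q := hρd.hasFDerivAt
  have Hpfd : HasFDerivAt p (fderiv ℝ p q) q := hpd.hasFDerivAt
  have Hθfd : HasFDerivAt θ (fderiv ℝ θ q) q := hθd.hasFDerivAt
  have Hωfd : HasFDerivAt ω (fderiv ℝ ω q) q := hωd.hasFDerivAt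
  have Hufd : HasFDerivAt u (fderiv ℝ u q) q := hud.hasFDerivAt
  have Hvfd : HasFDerivAt v (fderiv ℝ v q) q := hvd.hasFDerivAt
  -- the sound speed as an explicit composite
  have hradne : γ * p q * (ρ q)⁻¹ ≠ 0 := by
    rw [← div_eq_mul_inv]; exact hrad_pos.ne'
  have Hrad : HasFDerivAt (fun z => γ * p z * (ρ z)⁻¹)
      ((γ * p q) • ((-((ρ q) ^ 2)⁻¹) • fderiv ℝ ρ q) + (ρ q)⁻¹ • (γ • fderiv ℝ p q)) q :=
    (Hpfd.const_mul γ).mul ((hasDerivAt_inv hρ0.ne').comp_hasFDerivAt q Hρfd)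
  have Hc_expl : HasFDerivAt (fun z => Real.sqrt (γ * p z * (ρ z)⁻¹))
      ((1 / (2 * Real.sqrt (γ * p q * (ρ q)⁻¹))) •
        ((γ * p q) • ((-((ρ q) ^ 2)⁻¹) • fderiv ℝ ρ q) + (ρ q)⁻¹ • (γ • fderiv ℝ p q))) q :=
    (Real.hasDerivAt_sqrt hradne).comp_hasFDerivAt q Hrad
  have hceq : cspd γ ρ p = fun z => Real.sqrt (γ * p z * (ρ z)⁻¹) := by
    funext z; simp only [cspd, div_eq_mul_inv]
  have hdc : DifferentiableAt ℝ (cspd γ ρ p) q := by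
    rw [hceq]; exact Hc_expl.differentiableAt
  have Hcfd : HasFDerivAt (cspd γ ρ p) (fderiv ℝ (cspd γ ρ p) q) q := hdc.hasFDerivAt
  have hfc : fderiv ℝ (cspd γ ρ p) q = fderiv ℝ (fun z => Real.sqrt (γ * p z * (ρ z)⁻¹)) q := by
    rw [hceq]
  have hc0eq : Real.sqrt (γ * p q * (ρ q)⁻¹) = cspd γ ρ p q := by
    rw [← div_eq_mul_inv]; rfl
  -- the evaluation direction
  have hAc : 2 * cspd γ ρ p q * ρ q
        * fderiv ℝ (cspd γ ρ p) q (Real.cos (θ q + ω q), Real.sin (θ q + ω q))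
      = γ * fderiv ℝ p q (Real.cos (θ q + ω q), Real.sin (θ q + ω q))
        - (cspd γ ρ p q) ^ 2 * fderiv ℝ ρ q (Real.cos (θ q + ω q), Real.sin (θ q + ω q)) := by
    rw [hfc, Hc_expl.fderiv, hc0eq]
    simp only [apply_dir, ContinuousLinearMap.add_apply, ContinuousLinearMap.coe_smul',
      Pi.smul_apply, smul_eq_mul]
    rw [hcsq]
    field_simp
    ring
  -- derivative of u along the direction
  have Hcosθ : HasFDerivAt (fun z => Real.cos (θ z)) ((-Real.sin (θ q)) • fderiv ℝ θ q) q :=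
    (Real.hasDerivAt_cos (θ q)).comp_hasFDerivAt q Hθfd
  have Hsinθ : HasFDerivAt (fun z => Real.sin (θ z)) ((Real.cos (θ q)) • fderiv ℝ θ q) q :=
    (Real.hasDerivAt_sin (θ q)).comp_hasFDerivAt q Hθfd
  have Hsinω : HasFDerivAt (fun z => Real.sin (ω z)) ((Real.cos (ω q)) • fderiv ℝ ω q) q :=
    (Real.hasDerivAt_sin (ω q)).comp_hasFDerivAt q Hωfd
  have Hsininv : HasFDerivAt (fun z => (Real.sin (ω z))⁻¹)
      ((-(Real.sin (ω q) ^ 2)⁻¹) • ((Real.cos (ω q)) • fderiv ℝ ω q)) q :=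
    (hasDerivAt_inv hsne).comp_hasFDerivAt q Hsinω
  have Hucomp : HasFDerivAt (fun z => cspd γ ρ p z * Real.cos (θ z) / Real.sin (ω z))
      ((cspd γ ρ p q * Real.cos (θ q)) • ((-(Real.sin (ω q) ^ 2)⁻¹) • ((Real.cos (ω q)) • fderiv ℝ ω q))
        + (Real.sin (ω q))⁻¹ • ((cspd γ ρ p q • ((-Real.sin (θ q)) • fderiv ℝ θ q)
            + Real.cos (θ q) • fderiv ℝ (cspd γ ρ p) q))) q := by
    simpa [div_eq_mul_inv, Pi.mul_def] using (Hcfd.mul Hcosθ).mul Hsininv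
  have Hvcomp : HasFDerivAt (fun z => cspd γ ρ p z * Real.sin (θ z) / Real.sin (ω z))
      ((cspd γ ρ p q * Real.sin (θ q)) • ((-(Real.sin (ω q) ^ 2)⁻¹) • ((Real.cos (ω q)) • fderiv ℝ ω q))
        + (Real.sin (ω q))⁻¹ • ((cspd γ ρ p q • ((Real.cos (θ q)) • fderiv ℝ θ q)
            + Real.sin (θ q) • fderiv ℝ (cspd γ ρ p) q))) q := by
    simpa [div_eq_mul_inv, Pi.mul_def] using (Hcfd.mul Hsinθ).mul Hsininv
  have hequ : u =ᶠ[nhds q] fun z => cspd γ ρ p z * Real.cos (θ z) / Real.sin (ω z) :=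
    Filter.eventuallyEq_of_mem hqn (fun z hz => hudef z hz)
  have heqv : v =ᶠ[nhds q] fun z => cspd γ ρ p z * Real.sin (θ z) / Real.sin (ω z) :=
    Filter.eventuallyEq_of_mem hqn (fun z hz => hvdef z hz)
  have Hufd2 : HasFDerivAt u _ q := (hequ.hasFDerivAt_iff).mpr Hucomp
  have Hvfd2 : HasFDerivAt v _ q := (heqv.hasFDerivAt_iff).mpr Hvcomp
  have hAu : Real.sin (ω q) ^ 2 * fderiv ℝ u q (Real.cos (θ q + ω q), Real.sin (θ q + ω q))
      = Real.sin (ω q) * Real.cos (θ q)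
          * fderiv ℝ (cspd γ ρ p) q (Real.cos (θ q + ω q), Real.sin (θ q + ω q))
        - cspd γ ρ p q * Real.sin (θ q) * Real.sin (ω q)
          * fderiv ℝ θ q (Real.cos (θ q + ω q), Real.sin (θ q + ω q))
        - cspd γ ρ p q * Real.cos (θ q) * Real.cos (ω q)
          * fderiv ℝ ω q (Real.cos (θ q + ω q), Real.sin (θ q + ω q)) := by
    rw [Hufd2.fderiv]
    simp only [apply_dir, ContinuousLinearMap.add_apply, ContinuousLinearMap.coe_smul',
      Pi.smul_apply, smul_eq_mul]
    field_simp
    ring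
  have hAv : Real.sin (ω q) ^ 2 * fderiv ℝ v q (Real.cos (θ q + ω q), Real.sin (θ q + ω q))
      = Real.sin (ω q) * Real.sin (θ q)
          * fderiv ℝ (cspd γ ρ p) q (Real.cos (θ q + ω q), Real.sin (θ q + ω q))
        + cspd γ ρ p q * Real.cos (θ q) * Real.sin (ω q)
          * fderiv ℝ θ q (Real.cos (θ q + ω q), Real.sin (θ q + ω q))
        - cspd γ ρ p q * Real.sin (θ q) * Real.cos (ω q)
          * fderiv ℝ ω q (Real.cos (θ q + ω q), Real.sin (θ q + ω q)) := by
    rw [Hvfd2.fderiv]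
    simp only [apply_dir, ContinuousLinearMap.add_apply, ContinuousLinearMap.coe_smul',
      Pi.smul_apply, smul_eq_mul]
    field_simp
    ring
  -- characteristic equation in directional form
  have hC_raw : -(cspd γ ρ p q * ρ q * v q)
        * fderiv ℝ u q (Real.cos (θ q + ω q), Real.sin (θ q + ω q))
      + cspd γ ρ p q * ρ q * u q
        * fderiv ℝ v q (Real.cos (θ q + ω q), Real.sin (θ q + ω q))
      + Real.sqrt ((u q) ^ 2 + (v q) ^ 2 - (cspd γ ρ p q) ^ 2)
        * fderiv ℝ p q (Real.cos (θ q + ω q), Real.sin (θ q + ω q)) = 0 := by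
    simp only [px, py] at hCE
    simp only [apply_dir]
    linear_combination hCE
  rw [hRval] at hC_raw
  -- log S derivative
  have HS1 : HasFDerivAt (fun z => ρ z ^ (-γ)) ((-γ * ρ q ^ (-γ - 1)) • fderiv ℝ ρ q) q :=
    (Real.hasDerivAt_rpow_const (Or.inl hρ0.ne')).comp_hasFDerivAt q Hρfd
  have HS2 : HasFDerivAt (fun z => p z * ρ z ^ (-γ))
      (p q • ((-γ * ρ q ^ (-γ - 1)) • fderiv ℝ ρ q) + (ρ q ^ (-γ)) • fderiv ℝ p q) q :=
    Hpfd.mul HS1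
  have hSpos : 0 < p q * ρ q ^ (-γ) := mul_pos hp0 (Real.rpow_pos_of_pos hρ0 _)
  have HS3 : HasFDerivAt (fun z => Real.log (p z * ρ z ^ (-γ)))
      ((p q * ρ q ^ (-γ))⁻¹ •
        (p q • ((-γ * ρ q ^ (-γ - 1)) • fderiv ℝ ρ q) + (ρ q ^ (-γ)) • fderiv ℝ p q)) q :=
    by have := (Real.hasDerivAt_log hSpos.ne').comp_hasFDerivAt q HS2; exact this
  have hwne : ρ q ^ (-γ) ≠ 0 := (Real.rpow_pos_of_pos hρ0 _).ne'
  have hDlnS : fderiv ℝ (fun z => Real.log (p z * ρ z ^ (-γ))) q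
        (Real.cos (θ q + ω q), Real.sin (θ q + ω q))
      = fderiv ℝ p q (Real.cos (θ q + ω q), Real.sin (θ q + ω q)) / p q
        - γ * fderiv ℝ ρ q (Real.cos (θ q + ω q), Real.sin (θ q + ω q)) / ρ q := by
    rw [HS3.fderiv]
    simp only [apply_dir, ContinuousLinearMap.add_apply, ContinuousLinearMap.coe_smul',
      Pi.smul_apply, smul_eq_mul]
    rw [Real.rpow_sub_one hρ0.ne']
    field_simp
    ring
  -- log B derivative
  have HBu : HasFDerivAt (fun z => (u z) ^ 2) (u q • fderiv ℝ u q + u q • fderiv ℝ u q) q := by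
    simpa [pow_two, Pi.mul_def] using Hufd.mul Hufd
  have HBv : HasFDerivAt (fun z => (v z) ^ 2) (v q • fderiv ℝ v q + v q • fderiv ℝ v q) q := by
    simpa [pow_two, Pi.mul_def] using Hvfd.mul Hvfd
  have HBc : HasFDerivAt (fun z => (cspd γ ρ p z) ^ 2)
      (cspd γ ρ p q • fderiv ℝ (cspd γ ρ p) q + cspd γ ρ p q • fderiv ℝ (cspd γ ρ p) q) q := by
    simpa [pow_two, Pi.mul_def] using Hcfd.mul Hcfd
  have HB4 : HasFDerivAt (fun z => ((u z) ^ 2 + (v z) ^ 2) / 2)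
      ((2:ℝ)⁻¹ • ((u q • fderiv ℝ u q + u q • fderiv ℝ u q)
        + (v q • fderiv ℝ v q + v q • fderiv ℝ v q))) q := by
    simpa [div_eq_mul_inv] using (HBu.add HBv).mul_const (2:ℝ)⁻¹
  have HB5 : HasFDerivAt (fun z => (cspd γ ρ p z) ^ 2 / (γ - 1))
      ((γ - 1)⁻¹ • (cspd γ ρ p q • fderiv ℝ (cspd γ ρ p) q
        + cspd γ ρ p q • fderiv ℝ (cspd γ ρ p) q)) q := by
    simpa [div_eq_mul_inv] using HBc.mul_const (γ - 1)⁻¹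
  have HB6 : HasFDerivAt (fun z => ((u z) ^ 2 + (v z) ^ 2) / 2 + (cspd γ ρ p z) ^ 2 / (γ - 1))
      ((2:ℝ)⁻¹ • ((u q • fderiv ℝ u q + u q • fderiv ℝ u q)
        + (v q • fderiv ℝ v q + v q • fderiv ℝ v q))
        + (γ - 1)⁻¹ • (cspd γ ρ p q • fderiv ℝ (cspd γ ρ p) q
          + cspd γ ρ p q • fderiv ℝ (cspd γ ρ p) q)) q := HB4.add HB5
  have hBpos : 0 < ((u q) ^ 2 + (v q) ^ 2) / 2 + (cspd γ ρ p q) ^ 2 / (γ - 1) := by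
    have h1 : 0 < (cspd γ ρ p q) ^ 2 / (γ - 1) := div_pos (pow_pos hc0pos 2) (by linarith)
    have h2 : (0:ℝ) ≤ ((u q) ^ 2 + (v q) ^ 2) / 2 := by positivity
    linarith
  have HB7 : HasFDerivAt
      (fun z => Real.log (((u z) ^ 2 + (v z) ^ 2) / 2 + (cspd γ ρ p z) ^ 2 / (γ - 1)))
      ((((u q) ^ 2 + (v q) ^ 2) / 2 + (cspd γ ρ p q) ^ 2 / (γ - 1))⁻¹ •
        ((2:ℝ)⁻¹ • ((u q • fderiv ℝ u q + u q • fderiv ℝ u q)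
          + (v q • fderiv ℝ v q + v q • fderiv ℝ v q))
          + (γ - 1)⁻¹ • (cspd γ ρ p q • fderiv ℝ (cspd γ ρ p) q
            + cspd γ ρ p q • fderiv ℝ (cspd γ ρ p) q))) q :=
    by have := (Real.hasDerivAt_log hBpos.ne').comp_hasFDerivAt q HB6; exact this
  have hgm1 : γ - 1 ≠ 0 := by linarith
  have hDlnB : fderiv ℝ
        (fun z => Real.log (((u z) ^ 2 + (v z) ^ 2) / 2 + (cspd γ ρ p z) ^ 2 / (γ - 1))) q
        (Real.cos (θ q + ω q), Real.sin (θ q + ω q))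
      = (u q * fderiv ℝ u q (Real.cos (θ q + ω q), Real.sin (θ q + ω q))
          + v q * fderiv ℝ v q (Real.cos (θ q + ω q), Real.sin (θ q + ω q))
          + 2 * cspd γ ρ p q
            * fderiv ℝ (cspd γ ρ p) q (Real.cos (θ q + ω q), Real.sin (θ q + ω q)) / (γ - 1))
        / (((u q) ^ 2 + (v q) ^ 2) / 2 + (cspd γ ρ p q) ^ 2 / (γ - 1)) := by
    rw [HB7.fderiv]
    have hBne := hBpos.ne'
    set B0 : ℝ := ((u q) ^ 2 + (v q) ^ 2) / 2 + (cspd γ ρ p q) ^ 2 / (γ - 1) with hBdef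
    simp only [apply_dir, ContinuousLinearMap.add_apply, ContinuousLinearMap.coe_smul',
      Pi.smul_apply, smul_eq_mul]
    rw [eq_div_iff hBne]
    field_simp [hBne]
    ring
  -- rewrite the goal
  have gdd : ∀ f : ℝ × ℝ → ℝ, dDir (fun z => θ z + ω z) f q
      = fderiv ℝ f q (Real.cos (θ q + ω q), Real.sin (θ q + ω q)) := by
    intro f
    simp only [dDir, px, py]
    exact (apply_dir _ _).symm
  rw [gdd θ, gdd ω, gdd (fun z => Real.log (p z * (ρ z) ^ (-γ))),
    gdd (fun z => Real.log (((u z) ^ 2 + (v z) ^ 2) / 2 + (cspd γ ρ p z) ^ 2 / (γ - 1))),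
    hDlnS, hDlnB, Real.sin_two_mul]
  exact key_algebra γ (Real.sin (θ q)) (Real.cos (θ q)) (Real.sin (ω q)) (Real.cos (ω q))
    (ρ q) (p q) (cspd γ ρ p q) (u q) (v q)
    (fderiv ℝ θ q (Real.cos (θ q + ω q), Real.sin (θ q + ω q)))
    (fderiv ℝ ω q (Real.cos (θ q + ω q), Real.sin (θ q + ω q)))
    (fderiv ℝ p q (Real.cos (θ q + ω q), Real.sin (θ q + ω q)))
    (fderiv ℝ ρ q (Real.cos (θ q + ω q), Real.sin (θ q + ω q)))
    (fderiv ℝ (cspd γ ρ p) q (Real.cos (θ q + ω q), Real.sin (θ q + ω q)))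
    (fderiv ℝ u q (Real.cos (θ q + ω q), Real.sin (θ q + ω q)))
    (fderiv ℝ v q (Real.cos (θ q + ω q), Real.sin (θ q + ω q)))
    hγ hρ0 hp0 hsω hcω hc0pos hc2m hpyθ (hudef q hq) (hvdef q hq) hAu hAv hAc hC_raw
end

section
/- Let Ω ⊆ ℝ² be open, let α, β : Ω → ℝ be C¹, and assume sin(α−β) ≠ 0 at every point of Ω. Write ∂⁺f = cos(α)·f_x + sin(α)·f_y and ∂⁻f = cos(β)·f_x + sin(β)·f_y. Then for every C² function I : Ω → ℝ, at every point of Ω: ∂⁻(∂⁺I) − ∂⁺(∂⁻I) = [ (cos(α−β)·∂⁺β − ∂⁻α)·∂⁻I − (∂⁺β − cos(α−β)·∂⁻α)·∂⁺I ] / sin(α−β). -/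
open Real Set

/-- the commutator relation between `∂⁻` (direction `β`) and `∂⁺`
(direction `α`). -/
theorem commutator_dminus_dplus
    (Ω : Set (ℝ × ℝ)) (hΩ : IsOpen Ω)
    (α β : ℝ × ℝ → ℝ)
    (hα : ContDiffOn ℝ 1 α Ω) (hβ : ContDiffOn ℝ 1 β Ω)
    (hsin : ∀ p ∈ Ω, Real.sin (α p - β p) ≠ 0)
    (I : ℝ × ℝ → ℝ) (hI : ContDiffOn ℝ 2 I Ω) :
    ∀ p ∈ Ω,
      dDir β (dDir α I) p - dDir α (dDir β I) p =
        ((Real.cos (α p - β p) * dDir α β p - dDir β α p) * dDir β I p -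
            (dDir α β p - Real.cos (α p - β p) * dDir β α p) * dDir α I p) /
          Real.sin (α p - β p) := by
  intro p hp
  have hmem : Ω ∈ nhds p := hΩ.mem_nhds hp
  have hIp : ContDiffAt ℝ 2 I p := hI.contDiffAt hmem
  have hαd : DifferentiableAt ℝ α p := (hα.contDiffAt hmem).differentiableAt one_ne_zero
  have hβd : DifferentiableAt ℝ β p := (hβ.contDiffAt hmem).differentiableAt one_ne_zero
  set Dα := fderiv ℝ α p with hDα
  set Dβ := fderiv ℝ β p with hDβ
  set DI := fderiv ℝ I p with hDI
  set H := fderiv ℝ (fderiv ℝ I) p with hH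
  -- fderiv of fderiv exists
  have hF : ContDiffAt ℝ 1 (fderiv ℝ I) p := hIp.fderiv_right (by norm_num)
  have hFd : HasFDerivAt (fderiv ℝ I) H p := (hF.differentiableAt one_ne_zero).hasFDerivAt
  -- px I, py I have explicit derivatives
  have hpx : HasFDerivAt (px I) (H.flip (1, 0)) p := by
    have h := hFd.clm_apply (hasFDerivAt_const ((1 : ℝ), (0 : ℝ)) p)
    simp at h
    exact h
  have hpy : HasFDerivAt (py I) (H.flip (0, 1)) p := by
    have h := hFd.clm_apply (hasFDerivAt_const ((0 : ℝ), (1 : ℝ)) p)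
    simp at h
    exact h
  -- cos/sin composed with α, β
  have hca : HasFDerivAt (fun q => Real.cos (α q)) ((-Real.sin (α p)) • Dα) p :=
    (Real.hasDerivAt_cos (α p)).comp_hasFDerivAt p hαd.hasFDerivAt
  have hsa : HasFDerivAt (fun q => Real.sin (α q)) ((Real.cos (α p)) • Dα) p :=
    (Real.hasDerivAt_sin (α p)).comp_hasFDerivAt p hαd.hasFDerivAt
  have hcb : HasFDerivAt (fun q => Real.cos (β q)) ((-Real.sin (β p)) • Dβ) p :=
    (Real.hasDerivAt_cos (β p)).comp_hasFDerivAt p hβd.hasFDerivAt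
  have hsb : HasFDerivAt (fun q => Real.sin (β q)) ((Real.cos (β p)) • Dβ) p :=
    (Real.hasDerivAt_sin (β p)).comp_hasFDerivAt p hβd.hasFDerivAt
  -- derivative of dDir α I and dDir β I
  have hdα : HasFDerivAt (dDir α I)
      ((Real.cos (α p) • H.flip (1, 0) + px I p • ((-Real.sin (α p)) • Dα)) +
        (Real.sin (α p) • H.flip (0, 1) + py I p • ((Real.cos (α p)) • Dα))) p :=
    (hca.mul hpx).add (hsa.mul hpy)
  have hdβ : HasFDerivAt (dDir β I)
      ((Real.cos (β p) • H.flip (1, 0) + px I p • ((-Real.sin (β p)) • Dβ)) +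
        (Real.sin (β p) • H.flip (0, 1) + py I p • ((Real.cos (β p)) • Dβ))) p :=
    (hcb.mul hpx).add (hsb.mul hpy)
  have hsymm : H (1, 0) (0, 1) = H (0, 1) (1, 0) :=
    hIp.isSymmSndFDerivAt (by norm_num) _ _
  have hs := hsin p hp
  -- unfold everything
  rw [eq_div_iff hs]
  simp only [dDir, px, py, hdα.fderiv, hdβ.fderiv]
  simp only [ContinuousLinearMap.add_apply, ContinuousLinearMap.smul_apply,
    ContinuousLinearMap.flip_apply, smul_eq_mul, Real.cos_sub, Real.sin_sub,
    ← hDα, ← hDβ, ← hDI, ← hH, px, py]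
  have h1 : Real.sin (α p) ^ 2 + Real.cos (α p) ^ 2 = 1 := Real.sin_sq_add_cos_sq _
  have h2 : Real.sin (β p) ^ 2 + Real.cos (β p) ^ 2 = 1 := Real.sin_sq_add_cos_sq _
  set sa := Real.sin (α p); set ca := Real.cos (α p)
  set sb := Real.sin (β p); set cb := Real.cos (β p)
  set Ax := Dα (1, 0); set Ay := Dα (0, 1)
  set Bx := Dβ (1, 0); set By := Dβ (0, 1)
  set Ix := DI (1, 0); set Iy := DI (0, 1)
  set Hxx := H (1, 0) (1, 0); set Hyy := H (0, 1) (0, 1)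
  rw [hsymm]
  set Hxy := H (0, 1) (1, 0)
  linear_combination
    (By * Iy - cb ^ 2 * By * Iy - cb ^ 2 * Ax * Ix - sb * cb * Ay * Ix - sb * cb * Ax * Iy -
        sb ^ 2 * By * Iy - sb ^ 2 * Ay * Iy) * h1 +
    (-(By * Iy) + ca ^ 2 * By * Iy - ca ^ 2 * Bx * Ix - sa * ca * By * Ix - sa * ca * Bx * Iy) * h2
end

section
/- Let γ > 1, κ = (γ−1)/2, x₁ < x₂, φ ∈ C¹([x₁,x₂]), and let ρ̂, û, v̂, p̂ ∈ C¹([x₁,x₂]) with ρ̂>0, p̂>0, û>0 and γ·p̂ = ρ̂·(û²+v̂²); set θ̂ = arctan(v̂/û), Ŝ = p̂·ρ̂^{−γ}, B̂ = (û²+v̂²)/2 + (γ/(γ−1))·p̂/ρ̂, and assume cos(θ̂(x))·φ′(x) − sin(θ̂(x)) ≠ 0 for all x. Suppose S and B are positive C¹ functions on an open neighborhood of Γ = {(x,φ(x)) : x ∈ (x₁,x₂)} with S(x,φ(x)) = Ŝ(x), B(x,φ(x)) = B̂(x), and cos(θ̂(x))·S_x(x,φ(x)) + sin(θ̂(x))·S_y(x,φ(x))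 = 0 and cos(θ̂(x))·B_x(x,φ(x)) + sin(θ̂(x))·B_y(x,φ(x)) = 0 for all x ∈ (x₁,x₂). Then, writing ∂⁺f = −sin(θ̂)·f_x + cos(θ̂)·f_y (the directional derivative of angle θ̂+π/2) and G₀ = ((γ+1)/2)^{−(γ+1)/(2(γ−1))}, one has for every x ∈ (x₁,x₂): (1/G₀)·∂⁺( (1/(4κγ))·ln S − (1/(4κ))·ln B )(x,φ(x)) = −((γ+1)/2)^{(γ+1)/(2(γ−1))} · p̂′(x) / ( 2γ·p̂(x)·(cos(θ̂(x))·φ′(x) − sin(θ̂(x))) ). -/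
open Real Set

set_option maxHeartbeats 1000000 in
/-- the boundary value on the sonic curve of the quantity
`H = ∂⁺((1/(4κγ)) ln S − (1/(4κ)) ln B)/G₀`, expressed through the boundary data. -/
theorem boundary_value_of_H
    (γ x₁ x₂ : ℝ) (hγ : 1 < γ) (hx : x₁ < x₂)
    (φ ρh uh vh ph : ℝ → ℝ)
    (hφ : ContDiffOn ℝ 1 φ (Icc x₁ x₂))
    (hρh : ContDiffOn ℝ 1 ρh (Icc x₁ x₂))
    (huh : ContDiffOn ℝ 1 uh (Icc x₁ x₂))
    (hvh : ContDiffOn ℝ 1 vh (Icc x₁ x₂))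
    (hph : ContDiffOn ℝ 1 ph (Icc x₁ x₂))
    (hρpos : ∀ x ∈ Icc x₁ x₂, 0 < ρh x)
    (hppos : ∀ x ∈ Icc x₁ x₂, 0 < ph x)
    (hupos : ∀ x ∈ Icc x₁ x₂, 0 < uh x)
    (hsonic : ∀ x ∈ Icc x₁ x₂, γ * ph x = ρh x * ((uh x) ^ 2 + (vh x) ^ 2))
    (θh : ℝ → ℝ) (hθh : ∀ x, θh x = Real.arctan (vh x / uh x))
    (hang : ∀ x ∈ Icc x₁ x₂, Real.cos (θh x) * deriv φ x - Real.sin (θh x) ≠ 0)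
    (Ω : Set (ℝ × ℝ)) (hΩ : IsOpen Ω)
    (hΓΩ : ∀ x ∈ Ioo x₁ x₂, (x, φ x) ∈ Ω)
    (S B : ℝ × ℝ → ℝ)
    (hS : ContDiffOn ℝ 1 S Ω) (hB : ContDiffOn ℝ 1 B Ω)
    (hSpos : ∀ q ∈ Ω, 0 < S q) (hBpos : ∀ q ∈ Ω, 0 < B q)
    (hStrace : ∀ x ∈ Ioo x₁ x₂, S (x, φ x) = ph x * (ρh x) ^ (-γ))
    (hBtrace : ∀ x ∈ Ioo x₁ x₂,
      B (x, φ x) = ((uh x) ^ 2 + (vh x) ^ 2) / 2 + (γ / (γ - 1)) * (ph x / ρh x))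
    (hS0 : ∀ x ∈ Ioo x₁ x₂,
      Real.cos (θh x) * px S (x, φ x) + Real.sin (θh x) * py S (x, φ x) = 0)
    (hB0 : ∀ x ∈ Ioo x₁ x₂,
      Real.cos (θh x) * px B (x, φ x) + Real.sin (θh x) * py B (x, φ x) = 0) :
    ∀ x ∈ Ioo x₁ x₂,
      (1 / (((γ + 1) / 2) ^ (-(γ + 1) / (2 * (γ - 1))))) *
          (-Real.sin (θh x) *
              px (fun q => (1 / (4 * ((γ - 1) / 2) * γ)) * Real.log (S q)
                - (1 / (4 * ((γ - 1) / 2))) * Real.log (B q)) (x, φ x)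
            + Real.cos (θh x) *
              py (fun q => (1 / (4 * ((γ - 1) / 2) * γ)) * Real.log (S q)
                - (1 / (4 * ((γ - 1) / 2))) * Real.log (B q)) (x, φ x))
        = -(((γ + 1) / 2) ^ ((γ + 1) / (2 * (γ - 1)))) * deriv ph x /
            (2 * γ * ph x * (Real.cos (θh x) * deriv φ x - Real.sin (θh x))) := by
  intro x hx
  have hxI : x ∈ Icc x₁ x₂ := Ioo_subset_Icc_self hx
  have hIccN : Icc x₁ x₂ ∈ nhds x := Icc_mem_nhds hx.1 hx.2
  have hIooN : Ioo x₁ x₂ ∈ nhds x := Ioo_mem_nhds hx.1 hx.2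
  set pt : ℝ × ℝ := (x, φ x) with hpt
  have hptΩ : pt ∈ Ω := hΓΩ x hx
  -- abbreviations
  set c := Real.cos (θh x) with hc
  set s := Real.sin (θh x) with hs
  set d := deriv φ x with hd
  set P := ph x with hP
  set r := ρh x with hr
  have hPpos : 0 < P := hppos x hxI
  have hrpos : 0 < r := hρpos x hxI
  have hγ1 : γ - 1 ≠ 0 := sub_ne_zero.mpr (ne_of_gt hγ)
  have hγ0 : γ ≠ 0 := by positivity
  have hD : c * d - s ≠ 0 := hang x hxI
  set A := r ^ (-γ) with hA
  have hApos : 0 < A := Real.rpow_pos_of_pos hrpos _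
  -- differentiability of the 1D data at x
  have hφd : DifferentiableAt ℝ φ x := (hφ.differentiableOn one_ne_zero).differentiableAt hIccN
  have hρd : DifferentiableAt ℝ ρh x := (hρh.differentiableOn one_ne_zero).differentiableAt hIccN
  have hphd : DifferentiableAt ℝ ph x := (hph.differentiableOn one_ne_zero).differentiableAt hIccN
  set P' := deriv ph x with hP'
  set r' := deriv ρh x with hr'
  -- differentiability of S, B at pt
  have hSd : DifferentiableAt ℝ S pt := (hS.differentiableOn one_ne_zero).differentiableAt (hΩ.mem_nhds hptΩ)
  have hBd : DifferentiableAt ℝ B pt := (hB.differentiableOn one_ne_zero).differentiableAt (hΩ.mem_nhds hptΩ)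
  have hSne : S pt ≠ 0 := (hSpos pt hptΩ).ne'
  have hBne : B pt ≠ 0 := (hBpos pt hptΩ).ne'
  -- linearity of fderiv applied at (1, d)
  have hlin : ∀ f : ℝ × ℝ → ℝ, fderiv ℝ f pt (1, d) = px f pt + d * py f pt := by
    intro f
    have h1 : ((1 : ℝ), d) = ((1 : ℝ), (0 : ℝ)) + d • ((0 : ℝ), (1 : ℝ)) := by
      simp [Prod.ext_iff]
    simp only [px, py]
    rw [h1, map_add, map_smul, smul_eq_mul]
  -- the curve
  have hcurve : HasDerivAt (fun t => (t, φ t)) ((1 : ℝ), d) x :=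
    (hasDerivAt_id x).prodMk hφd.hasDerivAt
  -- chain rule for S along the curve, plus the trace identity
  have hchainS : px S pt + d * py S pt = P' * A + P * (r' * -γ * r ^ (-γ - 1)) := by
    have h1 : HasDerivAt (fun t => S (t, φ t)) (fderiv ℝ S pt (1, d)) x :=
      hSd.hasFDerivAt.comp_hasDerivAt x hcurve
    have h2 : HasDerivAt (fun t => ph t * ρh t ^ (-γ))
        (P' * A + P * (r' * -γ * r ^ (-γ - 1))) x :=
      hphd.hasDerivAt.mul (hρd.hasDerivAt.rpow_const (Or.inl hrpos.ne'))
    have hev : (fun t => S (t, φ t)) =ᶠ[nhds x] (fun t => ph t * ρh t ^ (-γ)) :=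
      Filter.eventuallyEq_of_mem hIooN (fun t ht => hStrace t ht)
    have h3 : HasDerivAt (fun t => S (t, φ t)) (P' * A + P * (r' * -γ * r ^ (-γ - 1))) x :=
      h2.congr_of_eventuallyEq hev
    rw [← hlin S]
    exact h1.unique h3
  -- chain rule for B along the curve, plus the trace identity (using the sonic relation)
  have htrB : ∀ t ∈ Ioo x₁ x₂, B (t, φ t) = (γ / 2 + γ / (γ - 1)) * (ph t / ρh t) := by
    intro t ht
    have htI : t ∈ Icc x₁ x₂ := Ioo_subset_Icc_self ht
    have hrt : (0 : ℝ) < ρh t := hρpos t htI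
    have hq : uh t ^ 2 + vh t ^ 2 = γ * ph t / ρh t := by
      rw [eq_div_iff hrt.ne']
      linear_combination (-1 : ℝ) * hsonic t htI
    rw [hBtrace t ht, hq]
    field_simp
  have hchainB : px B pt + d * py B pt
      = (γ / 2 + γ / (γ - 1)) * ((P' * r - P * r') / r ^ 2) := by
    have h1 : HasDerivAt (fun t => B (t, φ t)) (fderiv ℝ B pt (1, d)) x :=
      hBd.hasFDerivAt.comp_hasDerivAt x hcurve
    have h2 : HasDerivAt (fun t => (γ / 2 + γ / (γ - 1)) * (ph t / ρh t))
        ((γ / 2 + γ / (γ - 1)) * ((P' * r - P * r') / r ^ 2)) x :=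
      (hphd.hasDerivAt.div hρd.hasDerivAt hrpos.ne').const_mul _
    have hev : (fun t => B (t, φ t)) =ᶠ[nhds x]
        (fun t => (γ / 2 + γ / (γ - 1)) * (ph t / ρh t)) :=
      Filter.eventuallyEq_of_mem hIooN (fun t ht => htrB t ht)
    have h3 := h2.congr_of_eventuallyEq hev
    rw [← hlin B]
    exact h1.unique h3
  -- solve the 2×2 systems: the plus-characteristic derivatives of S and B
  have pyth : s ^ 2 + c ^ 2 = 1 := Real.sin_sq_add_cos_sq (θh x)
  have hS0' : c * px S pt + s * py S pt = 0 := hS0 x hx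
  have hB0' : c * px B pt + s * py B pt = 0 := hB0 x hx
  have hplusS : -s * px S pt + c * py S pt
      = (P' * A + P * (r' * -γ * r ^ (-γ - 1))) / (c * d - s) := by
    rw [eq_div_iff hD, ← hchainS]
    linear_combination (-c - s * d) * hS0' + (px S pt + d * py S pt) * pyth
  have hplusB : -s * px B pt + c * py B pt
      = ((γ / 2 + γ / (γ - 1)) * ((P' * r - P * r') / r ^ 2)) / (c * d - s) := by
    rw [eq_div_iff hD, ← hchainB]
    linear_combination (-c - s * d) * hB0' + (px B pt + d * py B pt) * pyth
  -- derivative of the log combination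
  set aa : ℝ := 1 / (4 * ((γ - 1) / 2) * γ) with haa
  set bb : ℝ := 1 / (4 * ((γ - 1) / 2)) with hbb
  have hLd : HasFDerivAt (fun q => aa * Real.log (S q) - bb * Real.log (B q))
      (aa • ((S pt)⁻¹ • fderiv ℝ S pt) - bb • ((B pt)⁻¹ • fderiv ℝ B pt)) pt :=
    ((hSd.hasFDerivAt.log hSne).const_mul aa).sub ((hBd.hasFDerivAt.log hBne).const_mul bb)
  have hpxL : px (fun q => aa * Real.log (S q) - bb * Real.log (B q)) pt
      = aa * ((S pt)⁻¹ * px S pt) - bb * ((B pt)⁻¹ * px B pt) := by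
    simp [px, hLd.fderiv, smul_eq_mul]
  have hpyL : py (fun q => aa * Real.log (S q) - bb * Real.log (B q)) pt
      = aa * ((S pt)⁻¹ * py S pt) - bb * ((B pt)⁻¹ * py B pt) := by
    simp [py, hLd.fderiv, smul_eq_mul]
  -- boundary values of S and B
  have hSv : S pt = P * A := hStrace x hx
  have hBv : B pt = (γ / 2 + γ / (γ - 1)) * (P / r) := htrB x hx
  have hA1 : r ^ (-γ - 1) = A / r := by
    rw [hA, show -γ - 1 = -γ + (-1) by ring, Real.rpow_add hrpos, Real.rpow_neg_one,
      div_eq_mul_inv]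
  -- the main combination
  have hLHS : -s * px (fun q => aa * Real.log (S q) - bb * Real.log (B q)) pt
      + c * py (fun q => aa * Real.log (S q) - bb * Real.log (B q)) pt
      = -P' / (2 * γ * P * (c * d - s)) := by
    have hcomb : -s * px (fun q => aa * Real.log (S q) - bb * Real.log (B q)) pt
        + c * py (fun q => aa * Real.log (S q) - bb * Real.log (B q)) pt
        = aa * (S pt)⁻¹ * (-s * px S pt + c * py S pt)
          - bb * (B pt)⁻¹ * (-s * px B pt + c * py B pt) := by
      rw [hpxL, hpyL]; ring
    have hC : γ / 2 + γ / (γ - 1) ≠ 0 :=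
      (add_pos (by positivity) (div_pos (by linarith) (by linarith))).ne'
    set Cv : ℝ := γ / 2 + γ / (γ - 1) with hCv
    have key : aa * (P * A)⁻¹ * (P' * A + P * (r' * -γ * (A / r)))
        - bb * (Cv * (P / r))⁻¹ * (Cv * ((P' * r - P * r') / r ^ 2))
        = -P' / (2 * γ * P) := by
      rw [haa, hbb]
      have hPne : P ≠ 0 := hPpos.ne'
      have hrne : r ≠ 0 := hrpos.ne'
      have hAne : A ≠ 0 := hApos.ne'
      clear_value A P r P' r' Cv
      field_simp
      ring
    rw [hcomb, hplusS, hplusB, hSv, hBv, hA1]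
    calc aa * ((P * A)⁻¹) * ((P' * A + P * (r' * -γ * (A / r))) / (c * d - s))
          - bb * ((Cv * (P / r))⁻¹)
            * (Cv * ((P' * r - P * r') / r ^ 2) / (c * d - s))
        = (aa * (P * A)⁻¹ * (P' * A + P * (r' * -γ * (A / r)))
            - bb * (Cv * (P / r))⁻¹
              * (Cv * ((P' * r - P * r') / r ^ 2))) / (c * d - s) := by
          ring
      _ = (-P' / (2 * γ * P)) / (c * d - s) := by rw [key]
      _ = -P' / (2 * γ * P * (c * d - s)) := by rw [div_div]
  -- rewrite the power prefactor
  have hG : (1 : ℝ) / ((γ + 1) / 2) ^ (-(γ + 1) / (2 * (γ - 1)))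
      = ((γ + 1) / 2) ^ ((γ + 1) / (2 * (γ - 1))) := by
    rw [show -(γ + 1) / (2 * (γ - 1)) = -((γ + 1) / (2 * (γ - 1))) by ring,
      Real.rpow_neg (by linarith : (0:ℝ) ≤ (γ + 1) / 2), one_div, inv_inv]
  rw [hG, hLHS]
  ring
end

section
/- Let x₁ < x₂, φ ∈ C¹([x₁,x₂]) and θ̂ ∈ C¹([x₁,x₂]) with cos(θ̂(x)) + φ′(x)·sin(θ̂(x)) ≠ 0 for all x. Suppose θ, ω, Ξ are C¹ on an open neighborhood Ω of Γ = {(x,φ(x)) : x ∈ (x₁,x₂)}, with θ(x,φ(x)) = θ̂(x) and ω(x,φ(x)) = π/2 for all x ∈ (x₁,x₂), and suppose that on Ω: ∂⁰θ + 2·sin²(ω)·∂⊥Ξ = 0 and ∂⊥θ + 2·cos²(ω)·∂⁰Ξ = 0, where ∂⁰f = cos(θ)·f_x + sin(θ)·f_y and ∂⊥f = −sin(θ)·f_x + cos(θ)·f_y. Then for every x ∈ (x₁,x₂), with α = θ+ω and ∂⁺f = cos(α)·f_x + sin(α)·f_y: (∂⁺Ξ)(x,φ(x)) = −θ̂′(x)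 / ( 2·(cos(θ̂(x)) + φ′(x)·sin(θ̂(x))) ). -/
open Real Set

/-- the boundary value of `∂⁺Ξ` on the sonic curve `ω = π/2`. -/
theorem boundary_value_of_dplus_Xi
    (x₁ x₂ : ℝ) (hx : x₁ < x₂)
    (φ θh : ℝ → ℝ)
    (hφ : ContDiffOn ℝ 1 φ (Icc x₁ x₂))
    (hθh : ContDiffOn ℝ 1 θh (Icc x₁ x₂))
    (hang : ∀ x ∈ Icc x₁ x₂, Real.cos (θh x) + deriv φ x * Real.sin (θh x) ≠ 0)
    (Ω : Set (ℝ × ℝ)) (hΩ : IsOpen Ω)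
    (hΓΩ : ∀ x ∈ Ioo x₁ x₂, (x, φ x) ∈ Ω)
    (θ ω Ξ : ℝ × ℝ → ℝ)
    (hθ : ContDiffOn ℝ 1 θ Ω) (hω : ContDiffOn ℝ 1 ω Ω) (hΞ : ContDiffOn ℝ 1 Ξ Ω)
    (hθtrace : ∀ x ∈ Ioo x₁ x₂, θ (x, φ x) = θh x)
    (hωtrace : ∀ x ∈ Ioo x₁ x₂, ω (x, φ x) = π / 2)
    (heq1 : ∀ p ∈ Ω,
      dDir θ θ p + 2 * Real.sin (ω p) ^ 2 *
        (-Real.sin (θ p) * px Ξ p + Real.cos (θ p) * py Ξ p) = 0)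
    (heq2 : ∀ p ∈ Ω,
      (-Real.sin (θ p) * px θ p + Real.cos (θ p) * py θ p)
        + 2 * Real.cos (ω p) ^ 2 * dDir θ Ξ p = 0) :
    ∀ x ∈ Ioo x₁ x₂,
      dDir (fun q => θ q + ω q) Ξ (x, φ x)
        = -deriv θh x / (2 * (Real.cos (θh x) + deriv φ x * Real.sin (θh x))) := by
  intro x hx'
  have hpΩ : ((x, φ x) : ℝ × ℝ) ∈ Ω := hΓΩ x hx'
  have hφd : DifferentiableAt ℝ φ x :=
    (hφ.differentiableOn one_ne_zero).differentiableAt (Icc_mem_nhds hx'.1 hx'.2)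
  have hθd : DifferentiableAt ℝ θ (x, φ x) :=
    (hθ.differentiableOn one_ne_zero).differentiableAt (hΩ.mem_nhds hpΩ)
  have hg : HasDerivAt (fun t => ((t, φ t) : ℝ × ℝ)) (1, deriv φ x) x :=
    (hasDerivAt_id x).prodMk hφd.hasDerivAt
  have hcomp : HasDerivAt (fun t => θ (t, φ t))
      (fderiv ℝ θ (x, φ x) (1, deriv φ x)) x :=
    hθd.hasFDerivAt.comp_hasDerivAt x hg
  have heqv : (fun t => θ (t, φ t)) =ᶠ[nhds x] θh := by
    filter_upwards [Ioo_mem_nhds hx'.1 hx'.2] with y hy using hθtrace y hy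
  have hderiv : deriv θh x = fderiv ℝ θ (x, φ x) (1, deriv φ x) := by
    rw [← heqv.deriv_eq, hcomp.deriv]
  have hsplit : fderiv ℝ θ (x, φ x) (1, deriv φ x)
      = px θ (x, φ x) + deriv φ x * py θ (x, φ x) := by
    have h1 : ((1 : ℝ), deriv φ x) = (1, 0) + deriv φ x • ((0 : ℝ), (1 : ℝ)) := by
      simp
    rw [h1, map_add, map_smul, smul_eq_mul]; rfl
  have hθp : θ (x, φ x) = θh x := hθtrace x hx'
  have hωp : ω (x, φ x) = π / 2 := hωtrace x hx'
  have h1 := heq1 (x, φ x) hpΩ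
  have h2 := heq2 (x, φ x) hpΩ
  have hD := hang x (mem_Icc_of_Ioo hx')
  simp only [dDir, hθp, hωp, Real.sin_pi_div_two, Real.cos_pi_div_two, one_pow,
    mul_one] at h1 h2 ⊢
  rw [Real.cos_add_pi_div_two, Real.sin_add_pi_div_two]
  have hpyth := Real.sin_sq_add_cos_sq (θh x)
  have h2' : -Real.sin (θh x) * px θ (x, φ x) + Real.cos (θh x) * py θ (x, φ x) = 0 := by
    nlinarith [h2]
  set c := Real.cos (θh x)
  set s := Real.sin (θh x)
  set a := px θ (x, φ x)
  set b := py θ (x, φ x)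
  set u := px Ξ (x, φ x)
  set v := py Ξ (x, φ x)
  have key : (c * a + s * b) * (c + deriv φ x * s) = a + deriv φ x * b := by
    linear_combination (a + deriv φ x * b) * hpyth + (s - deriv φ x * c) * h2'
  rw [hderiv, hsplit, ← key]
  rw [eq_div_iff (mul_ne_zero two_ne_zero hD)]
  linear_combination (c + deriv φ x * s) * h1
end
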